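/- arXiv:2409.09420 — 8 statements merged into one kernel-verified Lean document; each statement's English description precedes it below -/
import Mathlib

section
/- For every real number κ with 0 < κ < 1, the infimum over all d1 ∈ ℕ, d1 ≥ 1, and all d2 ∈ ℕ with d2 > 2 of the quantity I_{q(d1/2, d2/2, κ)}(d1/2, d2/2) — that is, of P(X_{d1,d2} ≤ κ E[X_{d1,d2}]) for an F-random variable X_{d1,d2} — equals 0. -/
/-!
Take `d₁ = d₂ = n`, so that `a = b = n/2` and the integrand is `(t(1-t))^(a-1)`. The point
`q(a,a,κ)` tends to `κ/(κ+1) < 1/2`, so it eventually stays below some `c < 1/2`. Fix `s` with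
`c < s < 1/2`. Since `t(1-t)` increases on `[0,1/2]`, the numerator is at most
`(c(1-c))^(a-1)`, while the Beta integral is at least `(1/2 - s)(s(1-s))^(a-1)` (integrate over
`[s,1/2]` only). The ratio is `O(r^(a-1))` with `r = c(1-c)/(s(1-s)) < 1`, which tends to `0`.
-/

/-- The (complete) Beta function `B(a,b) = ∫₀¹ t^(a-1) (1-t)^(b-1) dt`. -/
noncomputable def betaFun (a b : ℝ) : ℝ :=
  ∫ t in (0:ℝ)..1, t ^ (a - 1) * (1 - t) ^ (b - 1)

/-- The regularized incomplete Beta function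
`I_x(a,b) = (∫₀^x t^(a-1) (1-t)^(b-1) dt) / B(a,b)`. -/
noncomputable def regIncBeta (x a b : ℝ) : ℝ :=
  (∫ t in (0:ℝ)..x, t ^ (a - 1) * (1 - t) ^ (b - 1)) / betaFun a b

/-- `q(a,b,κ) = κa/(κa + b - 1)`. -/
noncomputable def qF (a b κ : ℝ) : ℝ := κ * a / (κ * a + b - 1)

open Filter Topology Set MeasureTheory

lemma rpow_mul_one_sub_rpow_nonneg {t : ℝ} (p q : ℝ) (ht : t ∈ Icc (0:ℝ) 1) :
    0 ≤ t ^ p * (1 - t) ^ q :=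
  mul_nonneg (Real.rpow_nonneg ht.1 _) (Real.rpow_nonneg (by linarith [ht.2]) _)

lemma continuous_rpow_mul_one_sub_rpow {p q : ℝ} (hp : 0 ≤ p) (hq : 0 ≤ q) :
    Continuous fun t : ℝ => t ^ p * (1 - t) ^ q :=
  (continuous_id.rpow_const fun _ => Or.inr hp).mul
    ((continuous_const.sub continuous_id).rpow_const fun _ => Or.inr hq)

lemma regIncBeta_nonneg {x : ℝ} (a b : ℝ) (hx0 : 0 ≤ x) (hx1 : x ≤ 1) :
    0 ≤ regIncBeta x a b :=
  div_nonneg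
    (intervalIntegral.integral_nonneg hx0 fun _ ht =>
      rpow_mul_one_sub_rpow_nonneg _ _ ⟨ht.1, ht.2.trans hx1⟩)
    (intervalIntegral.integral_nonneg zero_le_one fun _ ht =>
      rpow_mul_one_sub_rpow_nonneg _ _ ht)

lemma qF_nonneg {a b κ : ℝ} (ha : 0 ≤ a) (hb : 1 ≤ b) (hκ : 0 ≤ κ) : 0 ≤ qF a b κ :=
  div_nonneg (by positivity) (by nlinarith)

lemma qF_le_one {a b κ : ℝ} (ha : 0 ≤ a) (hb : 1 ≤ b) (hκ : 0 ≤ κ) : qF a b κ ≤ 1 :=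
  div_le_one_of_le₀ (by linarith) (by nlinarith)

lemma tendsto_qF_self {κ : ℝ} (hκ : 0 ≤ κ) :
    Tendsto (fun a => qF a a κ) atTop (𝓝 (κ / (κ + 1))) := by
  have h : Tendsto (fun a : ℝ => κ / (κ + 1 - a⁻¹)) atTop (𝓝 (κ / (κ + 1 - 0))) :=
    tendsto_const_nhds.div (tendsto_const_nhds.sub tendsto_inv_atTop_zero) (by linarith)
  rw [sub_zero] at h
  refine h.congr' ?_
  filter_upwards [eventually_gt_atTop 0] with a ha
  rw [qF]
  field_simp

lemma mul_one_sub_le_mul_one_sub {u v : ℝ} (huv : u ≤ v) (hv : v ≤ 1 / 2) :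
    u * (1 - u) ≤ v * (1 - v) := by
  nlinarith

lemma integral_rpow_mul_one_sub_rpow_le {p q c : ℝ} (hp : 0 ≤ p) (hq : 0 ≤ q) (hqc : q ≤ c)
    (hc : c ≤ 1 / 2) :
    ∫ t in (0:ℝ)..q, t ^ p * (1 - t) ^ p ≤ q * (c * (1 - c)) ^ p := by
  calc ∫ t in (0:ℝ)..q, t ^ p * (1 - t) ^ p ≤ ∫ _ in (0:ℝ)..q, (c * (1 - c)) ^ p := by
        refine intervalIntegral.integral_mono_on hq
          ((continuous_rpow_mul_one_sub_rpow hp hp).intervalIntegrable _ _)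
          intervalIntegrable_const fun t ht => ?_
        have ht1 : 0 ≤ 1 - t := by linarith [ht.2]
        rw [← Real.mul_rpow ht.1 ht1]
        exact Real.rpow_le_rpow (mul_nonneg ht.1 ht1)
          (mul_one_sub_le_mul_one_sub (ht.2.trans hqc) hc) hp
    _ = q * (c * (1 - c)) ^ p := by simp

lemma mul_rpow_le_integral_rpow_mul_one_sub_rpow {p s : ℝ} (hp : 0 ≤ p) (hs0 : 0 ≤ s)
    (hs : s ≤ 1 / 2) :
    (1 / 2 - s) * (s * (1 - s)) ^ p ≤ ∫ t in (0:ℝ)..1, t ^ p * (1 - t) ^ p := by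
  have hcont := continuous_rpow_mul_one_sub_rpow hp hp
  calc (1 / 2 - s) * (s * (1 - s)) ^ p = ∫ _ in s..1 / 2, (s * (1 - s)) ^ p := by simp
    _ ≤ ∫ t in s..1 / 2, t ^ p * (1 - t) ^ p := by
        refine intervalIntegral.integral_mono_on hs intervalIntegrable_const
          (hcont.intervalIntegrable _ _) fun t ht => ?_
        have ht1 : 0 ≤ 1 - t := by linarith [ht.2]
        rw [← Real.mul_rpow (hs0.trans ht.1) ht1]
        exact Real.rpow_le_rpow (mul_nonneg hs0 (by linarith))
          (mul_one_sub_le_mul_one_sub ht.1 ht.2) hp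
    _ ≤ ∫ t in (0:ℝ)..1, t ^ p * (1 - t) ^ p :=
        intervalIntegral.integral_mono_interval hs0 hs (by norm_num)
          (ae_restrict_of_forall_mem measurableSet_Ioc fun _ ht =>
            rpow_mul_one_sub_rpow_nonneg _ _ (Ioc_subset_Icc_self ht))
          (hcont.intervalIntegrable _ _)

lemma regIncBeta_self_le {a q c s : ℝ} (ha : 1 ≤ a) (hq : 0 ≤ q) (hqc : q ≤ c) (hcs : c ≤ s)
    (hs0 : 0 < s) (hs : s < 1 / 2) :
    regIncBeta q a a ≤ (c * (1 - c) / (s * (1 - s))) ^ (a - 1) / (1 / 2 - s) := by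
  have hp : 0 ≤ a - 1 := by linarith
  have hc : 0 ≤ c * (1 - c) := mul_nonneg (hq.trans hqc) (by linarith)
  have hs1 : 0 < s * (1 - s) := mul_pos hs0 (by linarith)
  calc regIncBeta q a a
      ≤ q * (c * (1 - c)) ^ (a - 1) / ((1 / 2 - s) * (s * (1 - s)) ^ (a - 1)) :=
        div_le_div₀ (by positivity) (integral_rpow_mul_one_sub_rpow_le hp hq hqc (by linarith))
          (mul_pos (by linarith) (Real.rpow_pos_of_pos hs1 _))
          (mul_rpow_le_integral_rpow_mul_one_sub_rpow hp hs0.le hs.le)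
    _ ≤ 1 * (c * (1 - c)) ^ (a - 1) / ((1 / 2 - s) * (s * (1 - s)) ^ (a - 1)) := by
        gcongr
        linarith
    _ = (c * (1 - c) / (s * (1 - s))) ^ (a - 1) / (1 / 2 - s) := by
        rw [Real.div_rpow hc hs1.le, one_mul, div_div, mul_comm (1 / 2 - s), ← div_div]

lemma tendsto_regIncBeta_qF_self {κ : ℝ} (hκ0 : 0 < κ) (hκ1 : κ < 1) :
    Tendsto (fun a => regIncBeta (qF a a κ) a a) atTop (𝓝 0) := by
  set L := κ / (κ + 1)
  have hL0 : 0 < L := by positivity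
  have hL : L < 1 / 2 := by rw [div_lt_iff₀ (by linarith)]; linarith
  obtain ⟨c, hLc, hc⟩ := exists_between hL
  obtain ⟨s, hcs, hs⟩ := exists_between hc
  have hr0 : 0 ≤ c * (1 - c) / (s * (1 - s)) :=
    div_nonneg (mul_nonneg (by linarith) (by linarith)) (mul_nonneg (by linarith) (by linarith))
  have hr1 : c * (1 - c) / (s * (1 - s)) < 1 :=
    (div_lt_one (mul_pos (by linarith) (by linarith))).2 (by nlinarith)
  have hbound : Tendsto (fun a : ℝ => (c * (1 - c) / (s * (1 - s))) ^ (a - 1) / (1 / 2 - s))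
      atTop (𝓝 0) := by
    have h := ((tendsto_rpow_atTop_of_base_lt_one _ (by linarith) hr1).comp
      (tendsto_atTop_add_const_right _ (-1 : ℝ) tendsto_id)).div_const (1 / 2 - s)
    simpa only [zero_div, Function.comp_def, id, ← sub_eq_add_neg] using h
  refine tendsto_of_tendsto_of_tendsto_of_le_of_le' tendsto_const_nhds hbound ?_ ?_
  · filter_upwards [eventually_ge_atTop 1] with a ha
    exact regIncBeta_nonneg _ _ (qF_nonneg (by linarith) ha hκ0.le)
      (qF_le_one (by linarith) ha hκ0.le)
  · filter_upwards [eventually_ge_atTop 1,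
      (tendsto_qF_self hκ0.le).eventually_le_const hLc] with a ha hqc
    exact regIncBeta_self_le ha (qF_nonneg (by linarith) ha hκ0.le) hqc hcs.le (by linarith) hs

/-- For `0 < κ < 1`, the infimum over `d1 ≥ 1` and `d2 > 2` of
`P(X_{d1,d2} ≤ κ E[X_{d1,d2}]) = I_{q(d1/2, d2/2, κ)}(d1/2, d2/2)` equals `0`. -/
theorem inf_F_prob_eq_zero_of_lt_one (κ : ℝ) (hκ0 : 0 < κ) (hκ1 : κ < 1) :
    sInf { y : ℝ | ∃ d1 d2 : ℕ, 1 ≤ d1 ∧ 2 < d2 ∧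
      y = regIncBeta (qF ((d1 : ℝ) / 2) ((d2 : ℝ) / 2) κ) ((d1 : ℝ) / 2) ((d2 : ℝ) / 2) }
      = 0 := by
  set S := { y : ℝ | ∃ d1 d2 : ℕ, 1 ≤ d1 ∧ 2 < d2 ∧
      y = regIncBeta (qF ((d1 : ℝ) / 2) ((d2 : ℝ) / 2) κ) ((d1 : ℝ) / 2) ((d2 : ℝ) / 2) }
  have hS_nonneg : ∀ y ∈ S, 0 ≤ y := by
    rintro y ⟨d1, d2, -, h2, rfl⟩
    have hb : (1 : ℝ) ≤ d2 / 2 := by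
      rw [le_div_iff₀ two_pos]; exact_mod_cast (by omega : 2 ≤ d2)
    exact regIncBeta_nonneg _ _ (qF_nonneg (by positivity) hb hκ0.le)
      (qF_le_one (by positivity) hb hκ0.le)
  have hdiag : ∀ n : ℕ, 3 ≤ n → regIncBeta (qF (n / 2) (n / 2) κ) (n / 2) (n / 2) ∈ S :=
    fun n hn => ⟨n, n, by omega, by omega, rfl⟩
  refine le_antisymm ?_ (le_csInf ⟨_, hdiag 3 le_rfl⟩ hS_nonneg)
  exact ge_of_tendsto ((tendsto_regIncBeta_qF_self hκ0 hκ1).comp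
      (tendsto_natCast_atTop_atTop.atTop_div_const two_pos))
    ((eventually_ge_atTop 3).mono fun n hn => csInf_le ⟨0, hS_nonneg⟩ (hdiag n hn))
end

section
/- For every d1 ∈ ℕ, d1 ≥ 1, and every d2 ∈ ℕ with d2 > 2, one has the strict inequality I_{q(d1/2, d2/2, 1)}(d1/2, d2/2) > 1/2; that is, an F-random variable X_{d1,d2} satisfies P(X_{d1,d2} ≤ E[X_{d1,d2}]) > 1/2. -/
open Real Set MeasureTheory intervalIntegral

theorem exists_continuous_invOn_of_strictMonoOn {h : ℝ → ℝ} {α q : ℝ} (hαq : α ≤ q)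
    (hc : ContinuousOn h (Icc α q)) (hm : StrictMonoOn h (Icc α q)) :
    ∃ φ : ℝ → ℝ, Continuous φ ∧ MapsTo φ (Icc (h α) (h q)) (Icc α q) ∧
      InvOn φ h (Icc α q) (Icc (h α) (h q)) := by
  have himg : h '' Icc α q = Icc (h α) (h q) := hc.image_Icc_of_monotoneOn hαq hm.monotoneOn
  let e := (hm.orderIso h (Icc α q)).trans (OrderIso.setCongr _ _ himg)
  have he : ∀ x : Icc α q, (e x : ℝ) = h x := fun x => rfl
  have hle : h α ≤ h q := hm.monotoneOn (left_mem_Icc.2 hαq) (right_mem_Icc.2 hαq) hαq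
  refine ⟨fun y => (e.symm (projIcc (h α) (h q) hle y) : ℝ),
    continuous_subtype_val.comp (e.symm.continuous.comp continuous_projIcc),
    fun y _ => (e.symm _).2, fun x hx => ?_, fun y hy => ?_⟩
  · have : projIcc (h α) (h q) hle (h x) = e ⟨x, hx⟩ := by
      rw [projIcc_of_mem _ (himg ▸ mem_image_of_mem h hx)]; rfl
    simp only [this, OrderIso.symm_apply_apply]
  · simp only [projIcc_of_mem _ hy]
    rw [← he, OrderIso.apply_symm_apply]

theorem hasDerivAt_integral_of_continuousOn_Ioo {f : ℝ → ℝ} {α β x : ℝ}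
    (hf : IntervalIntegrable f volume α β) (hfc : ContinuousOn f (Ioo α β)) (hx : x ∈ Ioo α β) :
    HasDerivAt (fun y => ∫ t in α..y, f t) (f x) x :=
  integral_hasDerivAt_right
    (hf.mono_set (uIcc_subset_uIcc_left (Icc_subset_uIcc (Ioo_subset_Icc_self hx))))
    (hfc.stronglyMeasurableAtFilter isOpen_Ioo x hx) (hfc.continuousAt (Ioo_mem_nhds hx.1 hx.2))

theorem exists_sameLevel_of_unimodal {h h' : ℝ → ℝ} {α q β : ℝ} (hαq : α < q) (hqβ : q < β)
    (hc : ContinuousOn h (Icc α β)) (hαβ : h α = h β) (hd : ∀ x ∈ Ioo α β, HasDerivAt h (h' x) x)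
    (hpos : ∀ x ∈ Ioo α q, 0 < h' x) (hneg : ∀ x ∈ Ioo q β, h' x < 0) :
    ∃ g : ℝ → ℝ, ContinuousOn g (Icc q β) ∧ MapsTo g (Icc q β) (Icc α q) ∧ g q = q ∧ g β = α ∧
      ∀ t ∈ Ioo q β, g t ∈ Ioo α q ∧ h (g t) = h t ∧ HasDerivAt g (h' t / h' (g t)) t := by
  have hmono : StrictMonoOn h (Icc α q) := by
    refine strictMonoOn_of_deriv_pos (convex_Icc α q) (hc.mono (Icc_subset_Icc_right hqβ.le)) ?_
    intro x hx
    rw [interior_Icc] at hx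
    rw [(hd x ⟨hx.1, hx.2.trans hqβ⟩).deriv]
    exact hpos x hx
  have hanti : StrictAntiOn h (Icc q β) := by
    refine strictAntiOn_of_deriv_neg (convex_Icc q β) (hc.mono (Icc_subset_Icc_left hαq.le)) ?_
    intro x hx
    rw [interior_Icc] at hx
    rw [(hd x ⟨hαq.trans hx.1, hx.2⟩).deriv]
    exact hneg x hx
  obtain ⟨φ, hφc, hφmaps, hφl, hφr⟩ := exists_continuous_invOn_of_strictMonoOn hαq.le
    (hc.mono (Icc_subset_Icc_right hqβ.le)) hmono
  have hlevel : MapsTo h (Icc q β) (Icc (h α) (h q)) := fun t ht =>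
    ⟨hαβ ▸ hanti.antitoneOn ht (right_mem_Icc.2 hqβ.le) ht.2,
      hanti.antitoneOn (left_mem_Icc.2 hqβ.le) ht ht.1⟩
  have hlevel' : MapsTo h (Ioo q β) (Ioo (h α) (h q)) := fun t ht =>
    ⟨hαβ ▸ hanti (Ioo_subset_Icc_self ht) (right_mem_Icc.2 hqβ.le) ht.2,
      hanti (left_mem_Icc.2 hqβ.le) (Ioo_subset_Icc_self ht) ht.1⟩
  refine ⟨φ ∘ h, hφc.comp_continuousOn (hc.mono (Icc_subset_Icc_left hαq.le)), hφmaps.comp hlevel,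
    hφl (right_mem_Icc.2 hαq.le),
    by simp only [Function.comp_apply, ← hαβ, hφl (left_mem_Icc.2 hαq.le)], fun t ht => ?_⟩
  have hht : h (φ (h t)) = h t := hφr (Ioo_subset_Icc_self (hlevel' ht))
  obtain ⟨hαu, huq⟩ := hφmaps (Ioo_subset_Icc_self (hlevel' ht))
  have hut : φ (h t) ∈ Ioo α q :=
    ⟨hαu.lt_of_ne fun he => (hlevel' ht).1.ne (by rw [he, hht]),
      huq.lt_of_ne fun he => (hlevel' ht).2.ne (by rw [← he, hht])⟩
  have hφ' : HasDerivAt φ (h' (φ (h t)))⁻¹ (h t) := by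
    refine HasDerivAt.of_local_left_inverse hφc.continuousAt (hd _ ⟨hut.1, hut.2.trans hqβ⟩)
      (hpos _ hut).ne' ?_
    filter_upwards [Ioo_mem_nhds (hlevel' ht).1 (hlevel' ht).2] with y hy
    exact hφr (Ioo_subset_Icc_self hy)
  exact ⟨hut, hht, (hφ'.comp t (hd t ⟨hαq.trans ht.1, ht.2⟩)).congr_deriv (inv_mul_eq_div _ _)⟩

/-- `hcmp` says `f t / |h' t| < f u / h' u` whenever `u < q < t` lie on the same level of `h`. -/
theorem integral_right_lt_integral_left_of_unimodal {f h h' : ℝ → ℝ} {α q β : ℝ}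
    (hαq : α < q) (hqβ : q < β)
    (hf : IntervalIntegrable f volume α β) (hfc : ContinuousOn f (Ioo α β))
    (hc : ContinuousOn h (Icc α β)) (hαβ : h α = h β)
    (hd : ∀ x ∈ Ioo α β, HasDerivAt h (h' x) x)
    (hpos : ∀ x ∈ Ioo α q, 0 < h' x) (hneg : ∀ x ∈ Ioo q β, h' x < 0)
    (hcmp : ∀ u ∈ Ioo α q, ∀ t ∈ Ioo q β, h u = h t → f u * h' t + f t * h' u < 0) :
    ∫ x in q..β, f x < ∫ x in α..q, f x := by
  obtain ⟨g, hgc, hgmaps, hgq, hgβ, hg⟩ := exists_sameLevel_of_unimodal hαq hqβ hc hαβ hd hpos hneg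
  set F := fun y => ∫ x in α..y, f x
  have hF : ContinuousOn F (Icc α β) := by
    simpa [uIcc_of_le (hαq.trans hqβ).le] using continuousOn_primitive_interval' hf left_mem_uIcc
  have hF' : ∀ x ∈ Ioo α β, HasDerivAt F (f x) x := fun x hx =>
    hasDerivAt_integral_of_continuousOn_Ioo hf hfc hx
  set W := fun t => F (g t) + F t with hW_def
  have hWc : ContinuousOn W (Icc q β) :=
    (hF.comp hgc fun t ht => Icc_subset_Icc_right hqβ.le (hgmaps ht)).add
      (hF.mono (Icc_subset_Icc_left hαq.le))
  have hWanti : StrictAntiOn W (Icc q β) := by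
    refine strictAntiOn_of_deriv_neg (convex_Icc q β) hWc fun t ht => ?_
    rw [interior_Icc] at ht
    obtain ⟨hgt, hlevel, hg'⟩ := hg t ht
    have hW' : HasDerivAt W (f (g t) * (h' t / h' (g t)) + f t) t :=
      ((hF' _ ⟨hgt.1, hgt.2.trans hqβ⟩).comp t hg').add (hF' t ⟨hαq.trans ht.1, ht.2⟩)
    rw [hW'.deriv]
    have hpg := hpos _ hgt
    have hrw : f (g t) * (h' t / h' (g t)) + f t =
        (f (g t) * h' t + f t * h' (g t)) / h' (g t) := by
      field_simp
    rw [hrw]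
    exact div_neg_of_neg_of_pos (hcmp _ hgt t ht hlevel) hpg
  have hWq : W q = 2 * F q := by simp only [hW_def, hgq]; ring
  have hWβ : W β = F β := by simp only [hW_def, hgβ, F, integral_same, zero_add]
  have hsplit : F β = F q + ∫ x in q..β, f x :=
    have hqm : q ∈ uIcc α β := Icc_subset_uIcc ⟨hαq.le, hqβ.le⟩
    (integral_add_adjacent_intervals (hf.mono_set (uIcc_subset_uIcc_left hqm))
      (hf.mono_set (uIcc_subset_uIcc_right hqm))).symm
  have := hWanti (left_mem_Icc.2 hqβ.le) (right_mem_Icc.2 hqβ.le) hqβ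
  linarith

theorem two_mul_log_lt_sub_inv {r : ℝ} (hr : 1 < r) : 2 * log r < r - r⁻¹ := by
  have := self_lt_sinh_iff.2 (log_pos hr)
  rw [sinh_log (by linarith)] at this
  linarith

theorem strictMonoOn_add_one_mul_log_div_sub_one :
    StrictMonoOn (fun r : ℝ => (r + 1) * log r / (r - 1)) (Ioi 1) := by
  refine strictMonoOn_of_deriv_pos (convex_Ioi 1) ?_ fun r hr => ?_
  · exact ContinuousOn.div (by fun_prop (disch := exact fun r hr => (zero_lt_one.trans hr).ne'))
      (by fun_prop) fun r hr => sub_ne_zero.2 (ne_of_gt hr)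
  rw [interior_Ioi] at hr
  have hr0 : r ≠ 0 := (zero_lt_one.trans hr).ne'
  have hr1 : r - 1 ≠ 0 := sub_ne_zero.2 (ne_of_gt hr)
  have hd : HasDerivAt (fun r => (r + 1) * log r / (r - 1))
      (((1 * log r + (r + 1) * r⁻¹) * (r - 1) - (r + 1) * log r * 1) / (r - 1) ^ 2) r :=
    (((hasDerivAt_id' r).add_const 1).mul (hasDerivAt_log hr0)).div
      ((hasDerivAt_id' r).sub_const 1) hr1
  rw [hd.deriv]
  have hnum : (1 * log r + (r + 1) * r⁻¹) * (r - 1) - (r + 1) * log r * 1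
      = r - r⁻¹ - 2 * log r := by
    field_simp; ring
  rw [hnum]
  exact div_pos (by linarith [two_mul_log_lt_sub_inv hr]) (by positivity)

theorem two_mul_mul_log_lt {u t : ℝ} (hu : 0 < u) (hut : u < t) (ht : t < 1) :
    2 * ((1 - t) * (1 - u)) * log ((1 - u) / (1 - t)) < (t + u - 2 * t * u) * log (t / u) := by
  have h1t : 0 < 1 - t := by linarith
  have h1u : 0 < 1 - u := by linarith
  have hR' : 1 < (1 - u) / (1 - t) := (one_lt_div h1t).2 (by linarith)
  have hR : (1 - u) / (1 - t) < t / u * ((1 - u) / (1 - t)) :=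
    lt_mul_left (div_pos h1u h1t) ((one_lt_div hu).2 hut)
  have key := strictMonoOn_add_one_mul_log_div_sub_one hR' (hR'.trans hR) hR
  simp only at key
  rw [log_mul (div_pos (hu.trans hut) hu).ne' (div_pos h1u h1t).ne'] at key
  set L := log (t / u)
  set L' := log ((1 - u) / (1 - t))
  -- the two values of `r ↦ (r+1) log r / (r-1)` are `(2-t-u) L' / (t-u)` and
  -- `(t+u-2tu) (L+L') / (t-u)`
  rw [div_lt_div_iff₀ (by linarith) (by linarith)] at key
  field_simp at key
  refine lt_of_mul_lt_mul_right (a := t - u) ?_ (by linarith)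
  linear_combination key

theorem two_mul_mul_lt_of_mul_log_eq {a b u t : ℝ} (ha : 0 < a) (hu : 0 < u) (hut : u < t)
    (ht : t < 1) (hlevel : a * log (t / u) = (b - 1) * log ((1 - u) / (1 - t))) :
    2 * a * ((1 - t) * (1 - u)) < (b - 1) * (t + u - 2 * t * u) := by
  have hL' : 0 < log ((1 - u) / (1 - t)) := log_pos ((one_lt_div (by linarith)).2 (by linarith))
  have := mul_lt_mul_of_pos_left (two_mul_mul_log_lt hu hut ht) ha
  refine lt_of_mul_lt_mul_right (a := log ((1 - u) / (1 - t))) ?_ hL'.le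
  linear_combination this + (t + u - 2 * t * u) * hlevel

section

variable {a b : ℝ}

theorem hasDerivAt_rpow_mul_one_sub_rpow {t : ℝ} (ht0 : 0 < t) (ht1 : t < 1) :
    HasDerivAt (fun x => x ^ a * (1 - x) ^ (b - 1))
      (t ^ (a - 1) * (1 - t) ^ (b - 2) * (a - (a + b - 1) * t)) t := by
  have h1t : 0 < 1 - t := by linarith
  have hd := (hasDerivAt_rpow_const (p := a) (Or.inl ht0.ne')).mul
    ((hasDerivAt_rpow_const (p := b - 1) (Or.inl h1t.ne')).comp t ((hasDerivAt_id' t).const_sub 1))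
  refine hd.congr_deriv ?_
  simp only [Function.comp_apply]
  rw [show b - 2 = b - 1 - 1 by ring, rpow_sub_one h1t.ne' (b - 1), rpow_sub_one ht0.ne' a]
  field_simp
  ring

theorem mul_log_div_eq_of_rpow_mul_eq {u t : ℝ} (hu0 : 0 < u) (hu1 : u < 1) (ht0 : 0 < t)
    (ht1 : t < 1) (heq : u ^ a * (1 - u) ^ (b - 1) = t ^ a * (1 - t) ^ (b - 1)) :
    a * log (t / u) = (b - 1) * log ((1 - u) / (1 - t)) := by
  have h1u : 0 < 1 - u := by linarith
  have h1t : 0 < 1 - t := by linarith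
  have hlog := congrArg log heq
  rw [log_mul (by positivity) (by positivity), log_mul (by positivity) (by positivity),
    log_rpow hu0, log_rpow h1u, log_rpow ht0, log_rpow h1t] at hlog
  rw [log_div ht0.ne' hu0.ne', log_div h1u.ne' h1t.ne']
  linarith

theorem rpow_cross_sum_eq_mul {u t : ℝ} (hu1 : u < 1) (ht1 : t < 1) :
    u ^ (a - 1) * (1 - u) ^ (b - 1) * (t ^ (a - 1) * (1 - t) ^ (b - 2) * (a - (a + b - 1) * t))
      + t ^ (a - 1) * (1 - t) ^ (b - 1) * (u ^ (a - 1) * (1 - u) ^ (b - 2) * (a - (a + b - 1) * u))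
      = u ^ (a - 1) * (1 - u) ^ (b - 2) * (t ^ (a - 1) * (1 - t) ^ (b - 2)) *
        (2 * a * ((1 - t) * (1 - u)) - (b - 1) * (t + u - 2 * t * u)) := by
  have h1u : 1 - u ≠ 0 := by linarith
  have h1t : 1 - t ≠ 0 := by linarith
  rw [show b - 2 = b - 1 - 1 by ring, rpow_sub_one h1u (b - 1), rpow_sub_one h1t (b - 1)]
  field_simp
  ring

theorem intervalIntegrable_rpow_mul_one_sub_rpow (ha : 0 < a) (hb : 1 ≤ b) (x y : ℝ) :
    IntervalIntegrable (fun t => t ^ (a - 1) * (1 - t) ^ (b - 1)) volume x y :=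
  (intervalIntegrable_rpow' (by linarith)).mul_continuousOn
    ((continuous_const.sub continuous_id).rpow_const fun _ => Or.inr (by linarith)).continuousOn

theorem integral_rpow_mul_one_sub_rpow_right_lt_left (ha : 0 < a) (hb : 1 < b) :
    ∫ t in a / (a + b - 1)..1, t ^ (a - 1) * (1 - t) ^ (b - 1) <
      ∫ t in 0..a / (a + b - 1), t ^ (a - 1) * (1 - t) ^ (b - 1) := by
  have hab : 0 < a + b - 1 := by linarith
  have hq0 : 0 < a / (a + b - 1) := div_pos ha hab
  have hq1 : a / (a + b - 1) < 1 := (div_lt_one hab).2 (by linarith)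
  refine integral_right_lt_integral_left_of_unimodal (h := fun x => x ^ a * (1 - x) ^ (b - 1))
    (h' := fun x => x ^ (a - 1) * (1 - x) ^ (b - 2) * (a - (a + b - 1) * x)) hq0 hq1
    (intervalIntegrable_rpow_mul_one_sub_rpow ha hb.le 0 1) ?_ ?_ ?_
    (fun x hx => hasDerivAt_rpow_mul_one_sub_rpow hx.1 hx.2) ?_ ?_ ?_
  · exact fun x hx => ContinuousAt.continuousWithinAt (by
      fun_prop (disch := first | exact Or.inl hx.1.ne' | exact Or.inl (sub_pos.2 hx.2).ne'))
  · exact (continuous_id.rpow_const fun _ => Or.inr ha.le).continuousOn.mul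
      ((continuous_const.sub continuous_id).rpow_const fun _ => Or.inr (by linarith)).continuousOn
  · simp [zero_rpow ha.ne', zero_rpow (sub_ne_zero.2 hb.ne')]
  · rintro x ⟨hx0, hxq⟩
    have : x * (a + b - 1) < a := (lt_div_iff₀ hab).1 hxq
    have : 0 < 1 - x := by linarith
    have : 0 < a - (a + b - 1) * x := by linarith
    positivity
  · rintro x ⟨hqx, hx1⟩
    have : a < x * (a + b - 1) := (div_lt_iff₀ hab).1 hqx
    have : 0 < 1 - x := by linarith
    have := hq0.trans hqx
    exact mul_neg_of_pos_of_neg (by positivity) (by linarith)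
  · rintro u ⟨hu0, huq⟩ t ⟨hqt, ht1⟩ hlevel
    have hu1 : 0 < 1 - u := by linarith
    have ht0 : 0 < t := hq0.trans hqt
    have : 0 < 1 - t := by linarith
    rw [rpow_cross_sum_eq_mul (huq.trans hq1) ht1]
    have := two_mul_mul_lt_of_mul_log_eq ha hu0 (huq.trans hqt) ht1
      (mul_log_div_eq_of_rpow_mul_eq hu0 (huq.trans hq1) ht0 ht1 hlevel)
    exact mul_neg_of_pos_of_neg (by positivity) (by linarith)

theorem one_half_lt_regIncBeta_qF (ha : 0 < a) (hb : 1 < b) :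
    1 / 2 < regIncBeta (qF a b 1) a b := by
  have hq : qF a b 1 = a / (a + b - 1) := by simp only [qF, one_mul]
  set q := a / (a + b - 1)
  have hq0 : 0 < q := div_pos ha (by linarith)
  have hq1 : q ≤ 1 := (div_le_one (by linarith)).2 (by linarith)
  have hsplit : betaFun a b = (∫ t in 0..q, t ^ (a - 1) * (1 - t) ^ (b - 1)) +
      ∫ t in q..1, t ^ (a - 1) * (1 - t) ^ (b - 1) :=
    (integral_add_adjacent_intervals (intervalIntegrable_rpow_mul_one_sub_rpow ha hb.le _ _)
      (intervalIntegrable_rpow_mul_one_sub_rpow ha hb.le _ _)).symm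
  have htail : 0 ≤ ∫ t in q..1, t ^ (a - 1) * (1 - t) ^ (b - 1) :=
    integral_nonneg hq1 fun t ht =>
      mul_nonneg (rpow_nonneg (hq0.le.trans ht.1) _) (rpow_nonneg (sub_nonneg.2 ht.2) _)
  have hhead := integral_rpow_mul_one_sub_rpow_right_lt_left ha hb
  rw [regIncBeta, hq, lt_div_iff₀ (by linarith), hsplit]
  linarith

end

/-- For all `d1 ≥ 1`, `d2 > 2`,
`P(X_{d1,d2} ≤ E[X_{d1,d2}]) = I_{q(d1/2, d2/2, 1)}(d1/2, d2/2) > 1/2`. -/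
theorem F_prob_gt_half (d1 d2 : ℕ) (hd1 : 1 ≤ d1) (hd2 : 2 < d2) :
    1 / 2 <
      regIncBeta (qF ((d1 : ℝ) / 2) ((d2 : ℝ) / 2) 1) ((d1 : ℝ) / 2) ((d2 : ℝ) / 2) := by
  have hd1' : (1 : ℝ) ≤ d1 := mod_cast hd1
  have hd2' : (2 : ℝ) < d2 := mod_cast hd2
  exact one_half_lt_regIncBeta_qF (by linarith) (by linarith)
end

section
/- For every real number κ ≥ 1 and all d1 ∈ ℕ, d1 ≥ 1, and d2 ∈ ℕ with d2 > 2, one has the strict inequality I_{q(d1/2, d2/2, κ)}(d1/2, d2/2) > 1/2; that is, an F-random variable X_{d1,d2} satisfies P(X_{d1,d2} ≤ κ E[X_{d1,d2}]) > 1/2. -/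
/-!
With `a = d1/2`, `b = d2/2`, write `f t = t^(a-1) (1-t)^(b-1)`, `R = a/(b-1)` (the mean of the
odds `t/(1-t)` under `f`) and `p = R/(1+R)` (the point whose odds are `R`). Since `p ≤ q(a,b,κ)`
for `κ ≥ 1`, it suffices to show `∫₀ᵖ f > ∫ₚ¹ f`. The involution of `(0,1)` that inverts the
odds about `R` exchanges `(0,p)` and `(p,1)`; pulling `f` back along it gives `J` with
`∫ₚ¹ f = ∫₀ᵖ J`, so we need `∫₀ᵖ (f - J) > 0`. Two facts combine:
* `log (f/J)` vanishes at `p` and its derivative has the sign of a quadratic that is negative at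
  `p` and, on `(0,p)`, positive at most on an initial segment; by the mean value theorem `f - J`
  changes sign at most once on `(0,p)`, from negative to positive, say at `s`;
* folding the identity `∫₀¹ (R - odds) f = 0` at `p` gives `∫₀ᵖ (R - odds)(f - J) > 0`.
As the weight `R - odds` is nonnegative and decreasing on `(0,p)`, the sign change yields
`∫₀ᵖ (R - odds)(f - J) ≤ (R - odds s) ∫₀ᵖ (f - J)`.
-/

open MeasureTheory Set Real

lemma exists_threshold_of_monotoneOn {p : ℝ → Prop} {α β : ℝ} (hαβ : α ≤ β)
    (hp : MonotoneOn p (Ioo α β)) :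
    ∃ s ∈ Icc α β, (∀ x ∈ Ioo α s, ¬ p x) ∧ ∀ x ∈ Ioo s β, p x := by
  set S := insert β {x | x ∈ Ioo α β ∧ p x}
  have hα : α ∈ lowerBounds S := by
    rintro x (rfl | ⟨hx, -⟩)
    exacts [hαβ, hx.1.le]
  have hS : BddBelow S := ⟨α, hα⟩
  refine ⟨sInf S, ⟨le_csInf (insert_nonempty _ _) hα, csInf_le hS (mem_insert _ _)⟩, ?_, ?_⟩
  · intro x hx hpx
    have hxβ : x < β := hx.2.trans_le (csInf_le hS (mem_insert _ _))
    exact (csInf_le hS (Or.inr ⟨⟨hx.1, hxβ⟩, hpx⟩)).not_gt hx.2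
  · intro x hx
    obtain ⟨y, hyS, hyx⟩ := exists_lt_of_csInf_lt (insert_nonempty _ _) hx.1
    rcases hyS with rfl | ⟨hy, hpy⟩
    · exact absurd hx.2 hyx.not_gt
    · exact hp hy ⟨hy.1.trans hyx, hx.2⟩ hyx.le hpy

lemma integral_mul_le_mul_integral_of_antitoneOn {w g : ℝ → ℝ} {α β s : ℝ} (hs : s ∈ Icc α β)
    (hw : AntitoneOn w (Icc α β)) (hg_neg : ∀ x ∈ Ioo α s, g x ≤ 0)
    (hg_pos : ∀ x ∈ Ioo s β, 0 ≤ g x) (hg : IntervalIntegrable g volume α β)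
    (hwg : IntervalIntegrable (fun x => w x * g x) volume α β) :
    ∫ x in α..β, w x * g x ≤ w s * ∫ x in α..β, g x := by
  rw [← intervalIntegral.integral_const_mul]
  refine intervalIntegral.integral_mono_on_of_le_Ioo (hs.1.trans hs.2) hwg (hg.const_mul _)
    fun x hx => ?_
  rcases lt_trichotomy x s with hxs | rfl | hsx
  · exact mul_le_mul_of_nonpos_right (hw ⟨hx.1.le, hxs.le.trans hs.2⟩ hs hxs.le)
      (hg_neg x ⟨hx.1, hxs⟩)
  · rfl
  · exact mul_le_mul_of_nonneg_right (hw hs ⟨hs.1.trans hsx.le, hx.2.le⟩ hsx.le)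
      (hg_pos x ⟨hsx, hx.2⟩)

namespace BetaOdds

noncomputable def odds (t : ℝ) : ℝ := t / (1 - t)

lemma continuousOn_odds : ContinuousOn odds (Iio 1) :=
  continuousOn_id.div (continuousOn_const.sub continuousOn_id) fun _ ht => (sub_pos.2 ht).ne'

lemma monotoneOn_odds : MonotoneOn odds (Iio 1) := by
  intro x hx y hy hxy
  rw [odds, odds, div_le_div_iff₀ (sub_pos.2 hx) (sub_pos.2 hy)]
  nlinarith

noncomputable def reflectDenom (R v : ℝ) : ℝ := R ^ 2 * (1 - v) + v

/-- `odds (reflect R v) = R ^ 2 / odds v`: the log-odds are reflected about `log R`. -/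
noncomputable def reflect (R v : ℝ) : ℝ := R ^ 2 * (1 - v) / reflectDenom R v

noncomputable def fixedPt (R : ℝ) : ℝ := R / (1 + R)

noncomputable def pullback (R : ℝ) (g : ℝ → ℝ) (v : ℝ) : ℝ :=
  R ^ 2 / reflectDenom R v ^ 2 * g (reflect R v)

section Reflect

variable {R v : ℝ}

lemma fixedPt_pos (hR : 0 < R) : 0 < fixedPt R := by unfold fixedPt; positivity

lemma fixedPt_lt_one (hR : 0 < R) : fixedPt R < 1 := (div_lt_one (by linarith)).2 (by linarith)

lemma reflectDenom_pos (hR : 0 < R) (hv : v ∈ Icc 0 1) : 0 < reflectDenom R v := by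
  rcases hv.2.lt_or_eq with hv1 | rfl
  · have := mul_pos (pow_pos hR 2) (sub_pos.2 hv1)
    unfold reflectDenom; linarith [hv.1]
  · simp [reflectDenom]

lemma one_sub_reflect (hR : 0 < R) (hv : v ∈ Icc 0 1) :
    1 - reflect R v = v / reflectDenom R v := by
  have := (reflectDenom_pos hR hv).ne'
  rw [reflect, eq_div_iff this, sub_mul, div_mul_cancel₀ _ this, reflectDenom]
  ring

lemma reflect_sub_fixedPt (hR : 0 < R) (hv : v ∈ Icc 0 1) :
    reflect R v - fixedPt R = R * (fixedPt R - v) / reflectDenom R v := by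
  have := (reflectDenom_pos hR hv).ne'
  have : 1 + R ≠ 0 := by positivity
  rw [reflect, reflectDenom, fixedPt] at *
  field_simp
  ring

lemma reflect_mem_Ioo (hR : 0 < R) (hv : v ∈ Ioo 0 1) : reflect R v ∈ Ioo 0 1 := by
  have hD := reflectDenom_pos hR (Ioo_subset_Icc_self hv)
  have h1 := one_sub_reflect hR (Ioo_subset_Icc_self hv)
  constructor
  · exact div_pos (mul_pos (pow_pos hR 2) (sub_pos.2 hv.2)) hD
  · linarith [div_pos hv.1 hD]

lemma reflect_reflect (hR : 0 < R) (hv : v ∈ Icc 0 1) : reflect R (reflect R v) = v := by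
  have hD := reflectDenom_pos hR hv
  have hD' : reflectDenom R (reflect R v) = R ^ 2 / reflectDenom R v := by
    rw [reflectDenom, one_sub_reflect hR hv, reflect, reflectDenom] at *
    field_simp
    ring
  rw [reflect, hD', one_sub_reflect hR hv]
  field_simp

lemma reflect_mem_Ioo_fixedPt_one (hR : 0 < R) (hv : v ∈ Ioo 0 (fixedPt R)) :
    reflect R v ∈ Ioo (fixedPt R) 1 := by
  have hp := fixedPt_lt_one hR
  have hv' : v ∈ Icc 0 1 := ⟨hv.1.le, hv.2.le.trans hp.le⟩
  have := reflect_sub_fixedPt hR hv'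
  have : 0 < R * (fixedPt R - v) / reflectDenom R v :=
    div_pos (mul_pos hR (sub_pos.2 hv.2)) (reflectDenom_pos hR hv')
  exact ⟨by linarith, (reflect_mem_Ioo hR ⟨hv.1, hv.2.trans hp⟩).2⟩

lemma reflect_mem_Ioo_zero_fixedPt (hR : 0 < R) (hv : v ∈ Ioo (fixedPt R) 1) :
    reflect R v ∈ Ioo 0 (fixedPt R) := by
  have hp := fixedPt_pos hR
  have hv' : v ∈ Icc 0 1 := ⟨hp.le.trans hv.1.le, hv.2.le⟩
  have := reflect_sub_fixedPt hR hv'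
  have : R * (fixedPt R - v) / reflectDenom R v < 0 :=
    div_neg_of_neg_of_pos (mul_neg_of_pos_of_neg hR (sub_neg.2 hv.1)) (reflectDenom_pos hR hv')
  exact ⟨(reflect_mem_Ioo hR ⟨hp.trans hv.1, hv.2⟩).1, by linarith⟩

lemma image_reflect_Ioo (hR : 0 < R) :
    reflect R '' Ioo 0 (fixedPt R) = Ioo (fixedPt R) 1 := by
  refine Subset.antisymm (image_subset_iff.2 fun v hv => reflect_mem_Ioo_fixedPt_one hR hv) ?_
  intro t ht
  exact ⟨reflect R t, reflect_mem_Ioo_zero_fixedPt hR ht,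
    reflect_reflect hR ⟨(fixedPt_pos hR).le.trans ht.1.le, ht.2.le⟩⟩

lemma injOn_reflect (hR : 0 < R) : InjOn (reflect R) (Icc 0 1) := fun u hu v hv huv => by
  rw [← reflect_reflect hR hu, huv, reflect_reflect hR hv]

lemma hasDerivAt_reflectDenom (R v : ℝ) : HasDerivAt (reflectDenom R) (-R ^ 2 + 1) v := by
  have hnum : HasDerivAt (fun v => R ^ 2 * (1 - v)) (-R ^ 2) v := by
    simpa using ((hasDerivAt_id v).const_sub 1).const_mul (R ^ 2)
  exact hnum.add (hasDerivAt_id v)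

lemma hasDerivAt_reflect (hR : 0 < R) (hv : v ∈ Icc 0 1) :
    HasDerivAt (reflect R) (-(R ^ 2 / reflectDenom R v ^ 2)) v := by
  have hD := reflectDenom_pos hR hv
  have hnum : HasDerivAt (fun v => R ^ 2 * (1 - v)) (-R ^ 2) v := by
    simpa using ((hasDerivAt_id v).const_sub 1).const_mul (R ^ 2)
  refine (hnum.div (hasDerivAt_reflectDenom R v) hD.ne').congr_deriv ?_
  rw [reflectDenom] at *
  field_simp
  ring

lemma sub_odds_reflect (hR : 0 < R) (hv : v ∈ Ioo 0 1) :
    R - odds (reflect R v) = -(R * (R - odds v) / odds v) := by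
  have hv' := Ioo_subset_Icc_self hv
  have h0 : v ≠ 0 := hv.1.ne'
  have h1 : (1 : ℝ) - v ≠ 0 := (sub_pos.2 hv.2).ne'
  rw [odds, odds, one_sub_reflect hR hv', reflect, reflectDenom] at *
  have := (reflectDenom_pos hR hv').ne'
  rw [reflectDenom] at this
  field_simp
  ring

lemma odds_fixedPt (hR : 0 < R) : odds (fixedPt R) = R := by
  have : 1 + R ≠ 0 := by positivity
  rw [odds, fixedPt]
  field_simp
  ring

lemma reflectDenom_fixedPt (hR : 0 < R) : reflectDenom R (fixedPt R) = R := by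
  have : 1 + R ≠ 0 := by positivity
  rw [reflectDenom, fixedPt]
  field_simp
  ring

lemma odds_lt_iff (hR : 0 < R) (hv : v < 1) : odds v < R ↔ v < fixedPt R := by
  rw [odds, fixedPt, div_lt_iff₀ (sub_pos.2 hv), lt_div_iff₀ (by linarith)]
  constructor <;> intro h <;> linarith

lemma odds_le_iff (hR : 0 < R) (hv : v < 1) : odds v ≤ R ↔ v ≤ fixedPt R := by
  rw [odds, fixedPt, div_le_iff₀ (sub_pos.2 hv), le_div_iff₀ (by linarith)]
  constructor <;> intro h <;> linarith

lemma fixedPt_mem_uIcc (hR : 0 < R) : fixedPt R ∈ uIcc 0 1 := by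
  rw [uIcc_of_le zero_le_one]; exact ⟨(fixedPt_pos hR).le, (fixedPt_lt_one hR).le⟩

lemma Ioo_zero_fixedPt_subset (hR : 0 < R) : Ioo 0 (fixedPt R) ⊆ Icc 0 1 :=
  Ioo_subset_Icc_self.trans (Icc_subset_Icc le_rfl (fixedPt_lt_one hR).le)

lemma abs_deriv_reflect_smul (R : ℝ) (g : ℝ → ℝ) :
    (fun v => |-(R ^ 2 / reflectDenom R v ^ 2)| • g (reflect R v)) = pullback R g := by
  ext v
  rw [abs_neg, abs_of_nonneg (by positivity), smul_eq_mul, pullback]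

lemma integral_pullback (hR : 0 < R) (g : ℝ → ℝ) :
    ∫ v in 0..fixedPt R, pullback R g v = ∫ t in fixedPt R..1, g t := by
  rw [intervalIntegral.integral_of_le (fixedPt_pos hR).le,
    intervalIntegral.integral_of_le (fixedPt_lt_one hR).le, integral_Ioc_eq_integral_Ioo,
    integral_Ioc_eq_integral_Ioo, ← image_reflect_Ioo hR,
    integral_image_eq_integral_abs_deriv_smul (s := Ioo 0 (fixedPt R)) measurableSet_Ioo
      (fun v hv => (hasDerivAt_reflect hR (Ioo_zero_fixedPt_subset hR hv)).hasDerivWithinAt)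
      ((injOn_reflect hR).mono (Ioo_zero_fixedPt_subset hR)), abs_deriv_reflect_smul]

lemma intervalIntegrable_pullback_iff (hR : 0 < R) {g : ℝ → ℝ} :
    IntervalIntegrable (pullback R g) volume 0 (fixedPt R) ↔
      IntervalIntegrable g volume (fixedPt R) 1 := by
  rw [intervalIntegrable_iff_integrableOn_Ioo_of_le (fixedPt_pos hR).le,
    intervalIntegrable_iff_integrableOn_Ioo_of_le (fixedPt_lt_one hR).le, ← image_reflect_Ioo hR,
    integrableOn_image_iff_integrableOn_abs_deriv_smul (s := Ioo 0 (fixedPt R)) measurableSet_Ioo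
      (fun v hv => (hasDerivAt_reflect hR (Ioo_zero_fixedPt_subset hR hv)).hasDerivWithinAt)
      ((injOn_reflect hR).mono (Ioo_zero_fixedPt_subset hR)), abs_deriv_reflect_smul]

lemma eqOn_pullback_sub_odds_mul (hR : 0 < R) (g : ℝ → ℝ) :
    EqOn (pullback R fun t => (R - odds t) * g t)
      (fun v => -(R * (R - odds v) / odds v * pullback R g v)) (Ioo 0 (fixedPt R)) := by
  intro v hv
  simp only [pullback]
  rw [sub_odds_reflect hR ⟨hv.1, hv.2.trans (fixedPt_lt_one hR)⟩]
  ring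

lemma integral_sub_odds_mul_eq_neg_integral_pullback (hR : 0 < R) (g : ℝ → ℝ) :
    ∫ t in fixedPt R..1, (R - odds t) * g t =
      -∫ v in 0..fixedPt R, R * (R - odds v) / odds v * pullback R g v := by
  rw [← integral_pullback hR, ← intervalIntegral.integral_neg]
  exact intervalIntegral.integral_congr_Ioo_of_le (fixedPt_pos hR).le
    (eqOn_pullback_sub_odds_mul hR g)

lemma intervalIntegrable_sub_odds_div_mul_pullback (hR : 0 < R) {g : ℝ → ℝ}
    (hg : IntervalIntegrable (fun t => (R - odds t) * g t) volume (fixedPt R) 1) :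
    IntervalIntegrable (fun v => R * (R - odds v) / odds v * pullback R g v) volume 0
      (fixedPt R) := by
  convert (((intervalIntegrable_pullback_iff hR).2 hg).congr_uIoo
    (by rw [uIoo_of_le (fixedPt_pos hR).le]; exact eqOn_pullback_sub_odds_mul hR g)).neg using 1
  ext v; simp

end Reflect

noncomputable def betaIntegrand (a b t : ℝ) : ℝ := t ^ (a - 1) * (1 - t) ^ (b - 1)

noncomputable def meanOdds (a b : ℝ) : ℝ := a / (b - 1)

section Beta

variable {a b : ℝ}

lemma meanOdds_pos (ha : 0 < a) (hb : 1 < b) : 0 < meanOdds a b := div_pos ha (by linarith)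

lemma intervalIntegrable_betaIntegrand (ha : 0 < a) (hb : 1 ≤ b) (x y : ℝ) :
    IntervalIntegrable (betaIntegrand a b) volume x y :=
  (intervalIntegral.intervalIntegrable_rpow' (by linarith)).mul_continuousOn
    ((continuous_rpow_const (by linarith)).comp (continuous_const.sub continuous_id)).continuousOn

lemma betaIntegrand_pos {t : ℝ} (ht : t ∈ Ioo 0 1) : 0 < betaIntegrand a b t :=
  mul_pos (rpow_pos_of_pos ht.1 _) (rpow_pos_of_pos (sub_pos.2 ht.2) _)

lemma betaIntegrand_nonneg {t : ℝ} (ht : t ∈ Icc 0 1) : 0 ≤ betaIntegrand a b t :=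
  mul_nonneg (rpow_nonneg ht.1 _) (rpow_nonneg (sub_nonneg.2 ht.2) _)

lemma log_betaIntegrand {t : ℝ} (ht : t ∈ Ioo 0 1) :
    log (betaIntegrand a b t) = (a - 1) * log t + (b - 1) * log (1 - t) := by
  have h1 := sub_pos.2 ht.2
  rw [betaIntegrand, log_mul (rpow_pos_of_pos ht.1 _).ne' (rpow_pos_of_pos h1 _).ne',
    log_rpow ht.1, log_rpow h1]

lemma odds_mul_betaIntegrand {t : ℝ} (ht : t ∈ Ioo 0 1) :
    odds t * betaIntegrand a b t = t ^ a * (1 - t) ^ (b - 2) := by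
  have h0 : t ≠ 0 := ht.1.ne'
  have h1 : 0 < 1 - t := sub_pos.2 ht.2
  rw [odds, betaIntegrand, rpow_sub_one h0, show b - 1 = b - 2 + 1 by ring,
    rpow_add_one h1.ne']
  field_simp

lemma hasDerivAt_rpow_mul_rpow (hb : 1 < b) {t : ℝ} (ht : t ∈ Ioo 0 1) :
    HasDerivAt (fun t => t ^ a * (1 - t) ^ (b - 1))
      ((b - 1) * ((meanOdds a b - odds t) * betaIntegrand a b t)) t := by
  have h1 : 0 < 1 - t := sub_pos.2 ht.2
  have hG := (hasDerivAt_rpow_const (p := a) (Or.inl ht.1.ne')).mul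
    (((hasDerivAt_id t).const_sub 1).rpow_const (p := b - 1) (Or.inl h1.ne'))
  have hR : (b - 1) * meanOdds a b = a := mul_div_cancel₀ a (by linarith)
  refine hG.congr_deriv ?_
  calc a * t ^ (a - 1) * (1 - t) ^ (b - 1) + t ^ a * (-1 * (b - 1) * (1 - t) ^ (b - 1 - 1))
      = a * betaIntegrand a b t - (b - 1) * (t ^ a * (1 - t) ^ (b - 2)) := by
        rw [betaIntegrand, show b - 1 - 1 = b - 2 by ring]; ring
    _ = (b - 1) * ((meanOdds a b - odds t) * betaIntegrand a b t) := by
        rw [← odds_mul_betaIntegrand ht]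
        linear_combination (-betaIntegrand a b t) * hR

lemma intervalIntegrable_meanOdds_sub_odds_mul (ha : 0 < a) (hb : 1 < b) :
    IntervalIntegrable (fun t => (meanOdds a b - odds t) * betaIntegrand a b t) volume 0 1 := by
  have hpow : IntervalIntegrable (fun t => (1 - t) ^ (b - 2)) volume 0 1 := by
    simpa using (intervalIntegral.intervalIntegrable_rpow' (a := 1) (b := 0)
      (r := b - 2) (by linarith)).comp_sub_left 1
  refine (((intervalIntegrable_betaIntegrand ha hb.le 0 1).const_mul (meanOdds a b)).sub
    (hpow.continuousOn_mul (g := fun t => t ^ a)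
      (continuous_rpow_const ha.le).continuousOn)).congr_uIoo fun t ht => ?_
  rw [uIoo_of_le zero_le_one] at ht
  simp only [sub_mul, odds_mul_betaIntegrand ht]

lemma integral_meanOdds_sub_odds_mul (ha : 0 < a) (hb : 1 < b) :
    ∫ t in 0..1, (meanOdds a b - odds t) * betaIntegrand a b t = 0 := by
  have hcont : ContinuousOn (fun t : ℝ => t ^ a * (1 - t) ^ (b - 1)) (Icc 0 1) :=
    ((continuous_rpow_const ha.le).mul ((continuous_rpow_const (by linarith)).comp
      (continuous_const.sub continuous_id))).continuousOn
  have hFTC := intervalIntegral.integral_eq_sub_of_hasDerivAt_of_le zero_le_one hcont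
    (fun t ht => hasDerivAt_rpow_mul_rpow hb ht)
    ((intervalIntegrable_meanOdds_sub_odds_mul ha hb).const_mul (b - 1))
  rw [intervalIntegral.integral_const_mul, zero_rpow ha.ne', sub_self,
    zero_rpow (by linarith : b - 1 ≠ 0)] at hFTC
  simpa [(by linarith : b - 1 ≠ 0)] using hFTC

lemma pullback_betaIntegrand_pos {R v : ℝ} (hR : 0 < R) (hv : v ∈ Ioo 0 1) :
    0 < pullback R (betaIntegrand a b) v :=
  mul_pos (div_pos (pow_pos hR 2) (pow_pos (reflectDenom_pos hR (Ioo_subset_Icc_self hv)) 2))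
    (betaIntegrand_pos (reflect_mem_Ioo hR hv))

lemma intervalIntegrable_pullback_betaIntegrand {R : ℝ} (hR : 0 < R) (ha : 0 < a) (hb : 1 ≤ b) :
    IntervalIntegrable (pullback R (betaIntegrand a b)) volume 0 (fixedPt R) :=
  (intervalIntegrable_pullback_iff hR).2 (intervalIntegrable_betaIntegrand ha hb _ _)

lemma integral_meanOdds_sub_odds_mul_eq (ha : 0 < a) (hb : 1 < b) :
    ∫ v in 0..fixedPt (meanOdds a b), (meanOdds a b - odds v) * betaIntegrand a b v =
      ∫ v in 0..fixedPt (meanOdds a b), meanOdds a b * (meanOdds a b - odds v) / odds v *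
        pullback (meanOdds a b) (betaIntegrand a b) v := by
  have hR := meanOdds_pos ha hb
  have hwf := intervalIntegrable_meanOdds_sub_odds_mul ha hb
  have := intervalIntegral.integral_add_adjacent_intervals
    (hwf.mono_set (uIcc_subset_uIcc left_mem_uIcc (fixedPt_mem_uIcc hR)))
    (hwf.mono_set (uIcc_subset_uIcc (fixedPt_mem_uIcc hR) right_mem_uIcc))
  rw [integral_meanOdds_sub_odds_mul ha hb,
    integral_sub_odds_mul_eq_neg_integral_pullback hR] at this
  linarith

lemma integral_meanOdds_sub_odds_mul_sub_pullback_pos (ha : 0 < a) (hb : 1 < b) :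
    0 < ∫ v in 0..fixedPt (meanOdds a b), (meanOdds a b - odds v) *
      (betaIntegrand a b v - pullback (meanOdds a b) (betaIntegrand a b) v) := by
  set R := meanOdds a b
  set J := pullback R (betaIntegrand a b)
  have hR : 0 < R := meanOdds_pos ha hb
  have hp1 := fixedPt_lt_one hR
  have hwf := intervalIntegrable_meanOdds_sub_odds_mul ha hb
  have hwf₁ := hwf.mono_set (uIcc_subset_uIcc left_mem_uIcc (fixedPt_mem_uIcc hR))
  have hwJ' := intervalIntegrable_sub_odds_div_mul_pullback hR
    (hwf.mono_set (uIcc_subset_uIcc (fixedPt_mem_uIcc hR) right_mem_uIcc))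
  have hwJ : IntervalIntegrable (fun v => (R - odds v) * J v) volume 0 (fixedPt R) :=
    (intervalIntegrable_pullback_betaIntegrand hR ha hb.le).continuousOn_mul
      (continuousOn_const.sub (continuousOn_odds.mono (by
        rw [uIcc_of_le (fixedPt_pos hR).le]; exact fun v hv => hv.2.trans_lt hp1)))
  have hpos : ∀ v ∈ Ioo 0 (fixedPt R),
      0 < R * (R - odds v) / odds v * J v - (R - odds v) * J v := by
    intro v hv
    have hw : 0 < R - odds v := sub_pos.2 ((odds_lt_iff hR (hv.2.trans hp1)).2 hv.2)
    have ho : 0 < odds v := div_pos hv.1 (sub_pos.2 (hv.2.trans hp1))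
    have hJ : 0 < J v := pullback_betaIntegrand_pos hR ⟨hv.1, hv.2.trans hp1⟩
    have : R * (R - odds v) / odds v * J v - (R - odds v) * J v =
        (R - odds v) ^ 2 / odds v * J v := by
      field_simp
    rw [this]; positivity
  calc 0 < ∫ v in 0..fixedPt R, (R * (R - odds v) / odds v * J v - (R - odds v) * J v) :=
        intervalIntegral.intervalIntegral_pos_of_pos_on (hwJ'.sub hwJ) hpos (fixedPt_pos hR)
    _ = ∫ v in 0..fixedPt R, (R - odds v) * (betaIntegrand a b v - J v) := by
        rw [intervalIntegral.integral_sub hwJ' hwJ, ← integral_meanOdds_sub_odds_mul_eq ha hb,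
          ← intervalIntegral.integral_sub hwf₁ hwJ]
        simp only [mul_sub]
        rfl

end Beta

noncomputable def logRatio (a b v : ℝ) : ℝ :=
  (a - b) * (log v - log (1 - v)) + (a + b) * log (reflectDenom (meanOdds a b) v) -
    2 * a * log (meanOdds a b)

noncomputable def logRatioDerivNum (a b v : ℝ) : ℝ :=
  (a - b) * reflectDenom (meanOdds a b) v + (a + b) * (1 - meanOdds a b ^ 2) * (v * (1 - v))

section SingleCrossing

variable {a b v : ℝ}

lemma log_pullback_betaIntegrand {R : ℝ} (hR : 0 < R) (hv : v ∈ Ioo 0 1) :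
    log (pullback R (betaIntegrand a b) v) = 2 * a * log R + (b - 1) * log v +
      (a - 1) * log (1 - v) - (a + b) * log (reflectDenom R v) := by
  have hv' := Ioo_subset_Icc_self hv
  have hD := reflectDenom_pos hR hv'
  have h1 := sub_pos.2 hv.2
  have hlog_reflect : log (reflect R v) = 2 * log R + log (1 - v) - log (reflectDenom R v) := by
    rw [reflect, log_div (by positivity) hD.ne', log_mul (by positivity) h1.ne', log_pow]
    push_cast; ring
  have hlog_one_sub : log (1 - reflect R v) = log v - log (reflectDenom R v) := by
    rw [one_sub_reflect hR hv', log_div hv.1.ne' hD.ne']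
  rw [pullback, log_mul (by positivity) (betaIntegrand_pos (reflect_mem_Ioo hR hv)).ne',
    log_div (by positivity) (by positivity), log_pow, log_pow,
    log_betaIntegrand (reflect_mem_Ioo hR hv), hlog_reflect, hlog_one_sub]
  push_cast; ring

lemma log_betaIntegrand_sub_log_pullback (ha : 0 < a) (hb : 1 < b) (hv : v ∈ Ioo 0 1) :
    log (betaIntegrand a b v) - log (pullback (meanOdds a b) (betaIntegrand a b) v) =
      logRatio a b v := by
  rw [log_betaIntegrand hv, log_pullback_betaIntegrand (meanOdds_pos ha hb) hv, logRatio]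
  ring

lemma pullback_le_iff (ha : 0 < a) (hb : 1 < b) (hv : v ∈ Ioo 0 1) :
    pullback (meanOdds a b) (betaIntegrand a b) v ≤ betaIntegrand a b v ↔ 0 ≤ logRatio a b v := by
  rw [← log_betaIntegrand_sub_log_pullback ha hb hv, sub_nonneg,
    log_le_log_iff (pullback_betaIntegrand_pos (meanOdds_pos ha hb) hv) (betaIntegrand_pos hv)]

lemma logRatio_fixedPt (ha : 0 < a) (hb : 1 < b) : logRatio a b (fixedPt (meanOdds a b)) = 0 := by
  have hR := meanOdds_pos ha hb
  have hlog_odds : log (fixedPt (meanOdds a b)) - log (1 - fixedPt (meanOdds a b)) =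
      log (meanOdds a b) := by
    rw [← log_div (fixedPt_pos hR).ne' (sub_pos.2 (fixedPt_lt_one hR)).ne', ← odds,
      odds_fixedPt hR]
  rw [logRatio, hlog_odds, reflectDenom_fixedPt hR]
  ring

lemma hasDerivAt_logRatio (ha : 0 < a) (hb : 1 < b) (hv : v ∈ Ioo 0 1) :
    HasDerivAt (logRatio a b)
      (logRatioDerivNum a b v / (v * (1 - v) * reflectDenom (meanOdds a b) v)) v := by
  have hD := reflectDenom_pos (meanOdds_pos ha hb) (Ioo_subset_Icc_self hv)
  have h0 := hv.1.ne'
  have h1 := (sub_pos.2 hv.2).ne'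
  have hlog_one_sub : HasDerivAt (fun v => log (1 - v)) (-1 / (1 - v)) v :=
    ((hasDerivAt_id v).const_sub 1).log h1 |>.congr_deriv (by simp)
  have h := ((((hasDerivAt_log h0).sub hlog_one_sub).const_mul (a - b)).add
    (((hasDerivAt_reflectDenom _ v).log hD.ne').const_mul (a + b))).sub_const
      (2 * a * log (meanOdds a b))
  refine h.congr_deriv ?_
  rw [logRatioDerivNum]
  field_simp
  ring

lemma logRatioDerivNum_fixedPt_neg (ha : 0 < a) (hb : 1 < b) :
    logRatioDerivNum a b (fixedPt (meanOdds a b)) < 0 := by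
  have hR := meanOdds_pos ha hb
  have hab : meanOdds a b * (b - 1) = a := div_mul_cancel₀ a (by linarith)
  rw [logRatioDerivNum, reflectDenom_fixedPt hR, fixedPt]
  generalize meanOdds a b = R at hR hab ⊢
  subst hab
  have : (R * (b - 1) - b) * R + (R * (b - 1) + b) * (1 - R ^ 2) * (R / (1 + R) * (1 - R / (1 + R)))
      = -(2 * R ^ 2 / (1 + R)) := by
    field_simp
    ring
  rw [this, neg_lt_zero]
  positivity

lemma logRatioDerivNum_neg_of_meanOdds_le_one (ha : 0 < a) (hb : 1 < b) (hR1 : meanOdds a b ≤ 1)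
    (hv : v ∈ Icc 0 1) : logRatioDerivNum a b v < 0 := by
  have hR := meanOdds_pos ha hb
  have hD := reflectDenom_pos hR hv
  have hab : meanOdds a b * (b - 1) = a := div_mul_cancel₀ a (by linarith)
  rw [logRatioDerivNum]
  generalize meanOdds a b = R at hR hR1 hD hab ⊢
  subst hab
  have key : (1 + R) ^ 2 * ((R * (b - 1) - b) * reflectDenom R v +
        (R * (b - 1) + b) * (1 - R ^ 2) * (v * (1 - v))) =
      -(2 * R * (1 + R) * reflectDenom R v) -
        (R * (b - 1) + b) * (1 - R ^ 2) * (R - (1 + R) * v) ^ 2 := by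
    rw [reflectDenom]; ring
  have hsq : 0 ≤ (R * (b - 1) + b) * (1 - R ^ 2) * (R - (1 + R) * v) ^ 2 :=
    mul_nonneg (mul_nonneg (by nlinarith) (by nlinarith)) (sq_nonneg _)
  have hlin : 0 < 2 * R * (1 + R) * reflectDenom R v := by positivity
  nlinarith [sq_nonneg (1 + R)]

lemma logRatioDerivNum_pos_of_le (ha : 0 < a) (hb : 1 < b) {η ξ : ℝ} (hξ0 : 0 ≤ ξ) (hηξ : η ≤ ξ)
    (hξp : ξ ≤ fixedPt (meanOdds a b)) (hξ : 0 < logRatioDerivNum a b ξ) :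
    0 < logRatioDerivNum a b η := by
  have hR := meanOdds_pos ha hb
  rcases le_or_gt (meanOdds a b) 1 with hR1 | hR1
  · exact absurd hξ (logRatioDerivNum_neg_of_meanOdds_le_one ha hb hR1
      ⟨hξ0, hξp.trans (fixedPt_lt_one hR).le⟩).not_gt
  have hp := logRatioDerivNum_fixedPt_neg ha hb
  obtain rfl | hηξ := hηξ.eq_or_lt
  · exact hξ
  obtain hξp | hξp := hξp.eq_or_lt
  · rw [hξp] at hξ; linarith
  -- interpolation at `η < ξ < p` of a quadratic with leading coefficient `(a + b) * (R ^ 2 - 1)`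
  have key : (fixedPt (meanOdds a b) - ξ) * logRatioDerivNum a b η =
      (fixedPt (meanOdds a b) - η) * logRatioDerivNum a b ξ -
        (ξ - η) * logRatioDerivNum a b (fixedPt (meanOdds a b)) +
        (a + b) * (meanOdds a b ^ 2 - 1) *
          ((fixedPt (meanOdds a b) - ξ) * (ξ - η) * (fixedPt (meanOdds a b) - η)) := by
    simp only [logRatioDerivNum, reflectDenom]; ring
  have hcoef : 0 < (a + b) * (meanOdds a b ^ 2 - 1) := mul_pos (by linarith) (by nlinarith)
  have h1 : 0 < fixedPt (meanOdds a b) - ξ := sub_pos.2 hξp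
  have h2 : 0 < ξ - η := sub_pos.2 hηξ
  have h3 : 0 < fixedPt (meanOdds a b) - η := by linarith
  have : 0 < (fixedPt (meanOdds a b) - ξ) * logRatioDerivNum a b η := by
    rw [key]
    have := mul_pos h3 hξ
    have := mul_pos h2 (neg_pos.2 hp)
    have := mul_pos hcoef (mul_pos (mul_pos h1 h2) h3)
    linarith
  exact pos_of_mul_pos_right this h1.le

lemma monotoneOn_pullback_le (ha : 0 < a) (hb : 1 < b) :
    MonotoneOn (fun v => pullback (meanOdds a b) (betaIntegrand a b) v ≤ betaIntegrand a b v)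
      (Ioo 0 (fixedPt (meanOdds a b))) := by
  have hR := meanOdds_pos ha hb
  have hp1 := fixedPt_lt_one hR
  intro v₁ hv₁ v₂ hv₂ h12 hN
  have hv₁' : v₁ ∈ Ioo 0 1 := ⟨hv₁.1, hv₁.2.trans hp1⟩
  have hv₂' : v₂ ∈ Ioo 0 1 := ⟨hv₂.1, hv₂.2.trans hp1⟩
  simp only [pullback_le_iff ha hb hv₁', pullback_le_iff ha hb hv₂'] at hN ⊢
  refine le_of_not_gt fun hneg => ?_
  obtain rfl | h12 := h12.eq_or_lt
  · linarith
  have hderiv : ∀ x ∈ Ioo v₁ (fixedPt (meanOdds a b)), HasDerivAt (logRatio a b)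
      (logRatioDerivNum a b x / (x * (1 - x) * reflectDenom (meanOdds a b) x)) x :=
    fun x hx => hasDerivAt_logRatio ha hb ⟨hv₁.1.trans hx.1, hx.2.trans hp1⟩
  have hcont : ContinuousOn (logRatio a b) (Icc v₁ (fixedPt (meanOdds a b))) := fun x hx =>
    (hasDerivAt_logRatio ha hb ⟨hv₁.1.trans_le hx.1, hx.2.trans_lt hp1⟩).continuousAt
      |>.continuousWithinAt
  have hdenom : ∀ x ∈ Ioo v₁ (fixedPt (meanOdds a b)),
      0 < x * (1 - x) * reflectDenom (meanOdds a b) x := fun x hx =>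
    mul_pos (mul_pos (hv₁.1.trans hx.1) (sub_pos.2 (hx.2.trans hp1)))
      (reflectDenom_pos hR ⟨(hv₁.1.trans hx.1).le, (hx.2.trans hp1).le⟩)
  -- `logRatio` decreases somewhere on `(v₁, v₂)` and increases somewhere on `(v₂, p)`
  obtain ⟨η, hη, hηslope⟩ := exists_hasDerivAt_eq_slope (logRatio a b) _ h12
    (hcont.mono (Icc_subset_Icc le_rfl hv₂.2.le)) fun x hx => hderiv x ⟨hx.1, hx.2.trans hv₂.2⟩
  obtain ⟨ξ, hξ, hξslope⟩ := exists_hasDerivAt_eq_slope (logRatio a b) _ hv₂.2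
    (hcont.mono (Icc_subset_Icc h12.le le_rfl)) fun x hx => hderiv x ⟨h12.trans hx.1, hx.2⟩
  have hη' : η ∈ Ioo v₁ (fixedPt (meanOdds a b)) := ⟨hη.1, hη.2.trans hv₂.2⟩
  have hξ' : ξ ∈ Ioo v₁ (fixedPt (meanOdds a b)) := ⟨h12.trans hξ.1, hξ.2⟩
  have hΨη : logRatioDerivNum a b η < 0 := by
    refine neg_of_div_neg_left ?_ (hdenom η hη').le
    rw [hηslope]
    exact div_neg_of_neg_of_pos (by linarith) (sub_pos.2 h12)
  have hΨξ : 0 < logRatioDerivNum a b ξ := by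
    refine (div_pos_iff_of_pos_right (hdenom ξ hξ')).1 ?_
    rw [hξslope, logRatio_fixedPt ha hb]
    exact div_pos (by linarith) (sub_pos.2 hv₂.2)
  exact hΨη.not_gt (logRatioDerivNum_pos_of_le ha hb (hv₁.1.trans hξ'.1).le
    (hη.2.trans hξ.1).le hξ.2.le hΨξ)

end SingleCrossing

section Main

variable {a b : ℝ}

lemma integral_pullback_betaIntegrand_lt (ha : 0 < a) (hb : 1 < b) :
    ∫ v in 0..fixedPt (meanOdds a b), pullback (meanOdds a b) (betaIntegrand a b) v <
      ∫ v in 0..fixedPt (meanOdds a b), betaIntegrand a b v := by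
  have hR := meanOdds_pos ha hb
  have hp0 := (fixedPt_pos hR).le
  have hp1 := fixedPt_lt_one hR
  obtain ⟨s, hs, hneg, hpos⟩ := exists_threshold_of_monotoneOn hp0 (monotoneOn_pullback_le ha hb)
  have hN := (intervalIntegrable_betaIntegrand ha hb.le 0 (fixedPt (meanOdds a b))).sub
    (intervalIntegrable_pullback_betaIntegrand hR ha hb.le)
  have hw : AntitoneOn (fun v => meanOdds a b - odds v) (Icc 0 (fixedPt (meanOdds a b))) :=
    fun x hx y hy hxy => sub_le_sub_left
      (monotoneOn_odds (hx.2.trans_lt hp1) (hy.2.trans_lt hp1) hxy) _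
  have hle := integral_mul_le_mul_integral_of_antitoneOn hs hw
    (fun x hx => sub_nonpos.2 (not_le.1 (hneg x hx)).le) (fun x hx => sub_nonneg.2 (hpos x hx)) hN
    (hN.continuousOn_mul (continuousOn_const.sub (continuousOn_odds.mono (by
      rw [uIcc_of_le hp0]; exact fun v hv => hv.2.trans_lt hp1))))
  have hws : 0 ≤ meanOdds a b - odds s :=
    sub_nonneg.2 ((odds_le_iff hR (hs.2.trans_lt hp1)).2 hs.2)
  have := pos_of_mul_pos_right
    ((integral_meanOdds_sub_odds_mul_sub_pullback_pos ha hb).trans_le hle) hws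
  rwa [intervalIntegral.integral_sub (intervalIntegrable_betaIntegrand ha hb.le _ _)
    (intervalIntegrable_pullback_betaIntegrand hR ha hb.le), sub_pos] at this

lemma betaFun_eq_integral_add_integral_pullback (ha : 0 < a) (hb : 1 < b) :
    betaFun a b = (∫ v in 0..fixedPt (meanOdds a b), betaIntegrand a b v) +
      ∫ v in 0..fixedPt (meanOdds a b), pullback (meanOdds a b) (betaIntegrand a b) v := by
  rw [integral_pullback (meanOdds_pos ha hb)]
  exact (intervalIntegral.integral_add_adjacent_intervals
    (intervalIntegrable_betaIntegrand ha hb.le _ _)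
    (intervalIntegrable_betaIntegrand ha hb.le _ _)).symm

lemma half_lt_regIncBeta (ha : 0 < a) (hb : 1 < b) {x : ℝ} (hpx : fixedPt (meanOdds a b) ≤ x)
    (hx1 : x ≤ 1) : 1 / 2 < regIncBeta x a b := by
  have hR := meanOdds_pos ha hb
  have hp0 := fixedPt_pos hR
  have hfp : 0 < ∫ v in 0..fixedPt (meanOdds a b), betaIntegrand a b v :=
    intervalIntegral.intervalIntegral_pos_of_pos_on (intervalIntegrable_betaIntegrand ha hb.le _ _)
      (fun v hv => betaIntegrand_pos ⟨hv.1, hv.2.trans (fixedPt_lt_one hR)⟩) hp0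
  have hJ :
      0 ≤ ∫ v in 0..fixedPt (meanOdds a b), pullback (meanOdds a b) (betaIntegrand a b) v := by
    rw [integral_pullback hR]
    exact intervalIntegral.integral_nonneg (fixedPt_lt_one hR).le
      fun t ht => betaIntegrand_nonneg ⟨hp0.le.trans ht.1, ht.2⟩
  have hfx : ∫ v in 0..fixedPt (meanOdds a b), betaIntegrand a b v ≤
      ∫ v in 0..x, betaIntegrand a b v := by
    rw [← intervalIntegral.integral_add_adjacent_intervals
      (intervalIntegrable_betaIntegrand ha hb.le 0 (fixedPt (meanOdds a b)))
      (intervalIntegrable_betaIntegrand ha hb.le _ x), le_add_iff_nonneg_right]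
    exact intervalIntegral.integral_nonneg hpx
      fun t ht => betaIntegrand_nonneg ⟨hp0.le.trans ht.1, ht.2.trans hx1⟩
  have hB := betaFun_eq_integral_add_integral_pullback ha hb
  have hlt := integral_pullback_betaIntegrand_lt ha hb
  rw [regIncBeta, lt_div_iff₀ (by linarith)]
  change 1 / 2 * betaFun a b < ∫ v in 0..x, betaIntegrand a b v
  linarith

lemma fixedPt_meanOdds_le_qF (ha : 0 < a) (hb : 1 < b) {κ : ℝ} (hκ : 1 ≤ κ) :
    fixedPt (meanOdds a b) ≤ qF a b κ := by
  have hp : fixedPt (meanOdds a b) = a / (a + b - 1) := by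
    have : b - 1 ≠ 0 := by linarith
    rw [fixedPt, meanOdds, one_add_div this, div_div_div_cancel_right₀ this]
    ring_nf
  rw [hp, qF, div_le_div_iff₀ (by linarith) (by nlinarith)]
  nlinarith [mul_nonneg (mul_nonneg ha.le (sub_nonneg.2 hκ)) (sub_nonneg.2 hb.le)]

lemma qF_le_one (ha : 0 < a) (hb : 1 < b) {κ : ℝ} (hκ : 0 ≤ κ) : qF a b κ ≤ 1 :=
  div_le_one_of_le₀ (by linarith) (by nlinarith)

end Main

end BetaOdds

/-- For `κ ≥ 1` and all `d1 ≥ 1`, `d2 > 2`,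
`P(X_{d1,d2} ≤ κ E[X_{d1,d2}]) = I_{q(d1/2, d2/2, κ)}(d1/2, d2/2) > 1/2`. -/
theorem F_prob_gt_half_of_one_le (κ : ℝ) (hκ : 1 ≤ κ) (d1 d2 : ℕ)
    (hd1 : 1 ≤ d1) (hd2 : 2 < d2) :
    1 / 2 <
      regIncBeta (qF ((d1 : ℝ) / 2) ((d2 : ℝ) / 2) κ) ((d1 : ℝ) / 2) ((d2 : ℝ) / 2) := by
  have ha : 0 < (d1 : ℝ) / 2 := by
    have : (1 : ℝ) ≤ d1 := by exact_mod_cast hd1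
    linarith
  have hb : 1 < (d2 : ℝ) / 2 := by
    have : (3 : ℝ) ≤ d2 := by exact_mod_cast hd2
    linarith
  exact BetaOdds.half_lt_regIncBeta ha hb (BetaOdds.fixedPt_meanOdds_le_qF ha hb hκ)
    (BetaOdds.qF_le_one ha hb (by linarith))
end

section
/- For every real κ with 0 < κ ≤ 1, every real a ≥ 1/2, and every real b > 1, one has the strict inequality b · ∫_{q(a,b+1,κ)}^{q(a,b,κ)} t^(a-1) (1-t)^(b-1) dt > q(a,b+1,κ)^a · (1 − q(a,b+1,κ))^b. -/
/-!
Write `f t = t^(a-1) (1-t)^(b-1)`, `A = κa`, `S = A + b`, `p = q(a,b+1,κ) = A/S` and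
`q = q(a,b,κ) = A/(S-1)`, so that `0 < p < q < 1`. On `(0,1)` the function `f` is quasiconcave
(antitone if `a ≤ 1`, log-concave if `a ≥ 1`), hence `∫_p^q f ≥ (q-p) min (f p) (f q)`.
Since `p^a (1-p)^b = p (1-p) f p` and `p (1-p) S/(S-1) = b (q-p)`, it remains to show
`f p < S/(S-1) min (f p) (f q)`. Against `f q` this reads, after taking logarithms,
`(b-1) log (1 + 1/(b-1)) < (a+b-1) log (1 + 1/(S-1))`, which follows from the monotonicity of
`x ↦ x log (1 + 1/x)` together with `b - 1 < S - 1 ≤ a + b - 1` (the last because `κ ≤ 1`).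
-/

open Real Set

lemma hasDerivAt_mul_log_add_one_sub_log {x : ℝ} (hx : 0 < x) :
    HasDerivAt (fun x => x * (log (x + 1) - log x)) (log (x + 1) - log x - (x + 1)⁻¹) x := by
  have hlog_add_one : HasDerivAt (fun y => log (y + 1)) (x + 1)⁻¹ x := by
    simpa using ((hasDerivAt_id x).add_const 1).log (by positivity)
  refine ((hasDerivAt_id' x).mul (hlog_add_one.sub (hasDerivAt_log hx.ne'))).congr_deriv ?_
  simp only [Pi.sub_apply]
  field_simp
  ring

lemma strictMonoOn_mul_log_add_one_sub_log :
    StrictMonoOn (fun x : ℝ => x * (log (x + 1) - log x)) (Ioi 0) := by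
  refine strictMonoOn_of_deriv_pos (convex_Ioi 0)
    (fun x hx => (hasDerivAt_mul_log_add_one_sub_log hx).continuousAt.continuousWithinAt) ?_
  intro x hx
  rw [interior_Ioi] at hx
  have hx : 0 < x := hx
  rw [(hasDerivAt_mul_log_add_one_sub_log hx).deriv]
  have h := log_lt_sub_one_of_pos (x := x / (x + 1)) (by positivity) (by
    rw [ne_eq, div_eq_one_iff_eq (by positivity)]; linarith)
  rw [log_div hx.ne' (by positivity), div_sub_one (by positivity)] at h
  have : (x - (x + 1)) / (x + 1) = -(x + 1)⁻¹ := by field_simp; ring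
  linarith

lemma mul_log_add_one_sub_log_lt {v u w : ℝ} (hv : 0 < v) (hvu : v < u) (huw : u ≤ w) :
    v * (log (v + 1) - log v) < w * (log (u + 1) - log u) := by
  have hu : 0 < u := hv.trans hvu
  have hlog : 0 < log (u + 1) - log u := sub_pos.2 (log_lt_log hu (lt_add_one u))
  calc v * (log (v + 1) - log v) < u * (log (u + 1) - log u) :=
        strictMonoOn_mul_log_add_one_sub_log hv hu hvu
    _ ≤ w * (log (u + 1) - log u) := by gcongr

lemma QuasiconcaveOn.min_le_of_mem_Icc {𝕜 β : Type*} [Field 𝕜] [LinearOrder 𝕜]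
    [IsStrictOrderedRing 𝕜] [LinearOrder β] {s : Set 𝕜} {f : 𝕜 → β} {x y z : 𝕜}
    (hf : QuasiconcaveOn 𝕜 s f) (hx : x ∈ s) (hy : y ∈ s) (hz : z ∈ Icc x y) :
    min (f x) (f y) ≤ f z := by
  rw [← segment_eq_Icc (hz.1.trans hz.2)] at hz
  obtain ⟨α, β, hα, hβ, hαβ, rfl⟩ := hz
  exact (quasiconcaveOn_iff_min_le.1 hf).2 hx hy hα hβ hαβ

noncomputable def betaIntegrand (a b t : ℝ) : ℝ := t ^ (a - 1) * (1 - t) ^ (b - 1)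

section BetaIntegrand

variable {a b t : ℝ}

lemma betaIntegrand_pos (ht : t ∈ Ioo 0 1) : 0 < betaIntegrand a b t :=
  mul_pos (rpow_pos_of_pos ht.1 _) (rpow_pos_of_pos (sub_pos.2 ht.2) _)

lemma betaIntegrand_eq_exp (ht : t ∈ Ioo 0 1) :
    betaIntegrand a b t = exp ((a - 1) * log t + (b - 1) * log (1 - t)) := by
  rw [betaIntegrand, rpow_def_of_pos ht.1, rpow_def_of_pos (sub_pos.2 ht.2), ← exp_add]
  ring_nf

lemma continuousOn_betaIntegrand : ContinuousOn (betaIntegrand a b) (Ioo 0 1) := fun _ ht =>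
  ((continuousAt_id.rpow_const (Or.inl ht.1.ne')).mul
    ((continuousAt_const.sub continuousAt_id).rpow_const
      (Or.inl (sub_pos.2 ht.2).ne'))).continuousWithinAt

lemma antitoneOn_betaIntegrand (ha : a ≤ 1) (hb : 1 ≤ b) :
    AntitoneOn (betaIntegrand a b) (Ioo 0 1) := fun s hs t ht hst =>
  mul_le_mul (rpow_le_rpow_of_nonpos hs.1 hst (by linarith))
    (rpow_le_rpow (sub_pos.2 ht.2).le (by linarith) (by linarith))
    (rpow_nonneg (sub_pos.2 ht.2).le _) (rpow_nonneg hs.1.le _)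

lemma concaveOn_log_betaIntegrand (ha : 1 ≤ a) (hb : 1 ≤ b) :
    ConcaveOn ℝ (Ioo 0 1) fun t => (a - 1) * log t + (b - 1) * log (1 - t) := by
  have hlog : ConcaveOn ℝ (Ioo 0 1) log :=
    strictConcaveOn_log_Ioi.concaveOn.subset Ioo_subset_Ioi_self (convex_Ioo 0 1)
  have hlog_one_sub : ConcaveOn ℝ (Ioo 0 1) fun t => log (1 - t) := by
    have h := (strictConcaveOn_log_Ioi.concaveOn.comp_affineMap
      (AffineMap.lineMap (1 : ℝ) 0)).subset (fun t ht => ?_) (convex_Ioo 0 1)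
    · simpa [Function.comp_def, AffineMap.lineMap_apply_ring', neg_add_eq_sub] using h
    · simpa [AffineMap.lineMap_apply_ring', neg_add_eq_sub] using ht.2
  exact (hlog.smul (by linarith)).add (hlog_one_sub.smul (by linarith))

lemma quasiconcaveOn_betaIntegrand (hb : 1 ≤ b) :
    QuasiconcaveOn ℝ (Ioo 0 1) (betaIntegrand a b) := by
  rcases le_total a 1 with ha | ha
  · exact (antitoneOn_betaIntegrand ha hb).quasiconcaveOn (convex_Ioo 0 1)
  · intro r
    refine (congrArg (Convex ℝ) (Set.ext fun t => and_congr_right fun ht => ?_)).mp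
      ((concaveOn_log_betaIntegrand ha hb).quasiconcaveOn.monotone_comp exp_monotone r)
    rw [betaIntegrand_eq_exp ht, Function.comp_apply]

lemma rpow_mul_one_sub_rpow_eq_mul_betaIntegrand {p : ℝ} (hp : p ∈ Ioo 0 1) :
    p ^ a * (1 - p) ^ b = p * (1 - p) * betaIntegrand a b p := by
  conv_lhs => rw [← sub_add_cancel a 1, ← sub_add_cancel b 1,
    rpow_add_one hp.1.ne', rpow_add_one (sub_pos.2 hp.2).ne']
  rw [betaIntegrand]
  ring

lemma betaIntegrand_lt_mul_min {A : ℝ} (hA : 0 < A) (hAa : A ≤ a) (hb : 1 < b) :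
    betaIntegrand a b (A / (A + b)) < (A + b) / (A + b - 1) *
      min (betaIntegrand a b (A / (A + b))) (betaIntegrand a b (A / (A + b - 1))) := by
  have hS : 0 < A + b - 1 := by linarith
  have hp : A / (A + b) ∈ Ioo 0 1 := ⟨by positivity, (div_lt_one (by linarith)).2 (by linarith)⟩
  have hq : A / (A + b - 1) ∈ Ioo 0 1 := ⟨by positivity, (div_lt_one hS).2 (by linarith)⟩
  have h1p : 1 - A / (A + b) = b / (A + b) := by field_simp; ring
  have h1q : 1 - A / (A + b - 1) = (b - 1) / (A + b - 1) := by field_simp; ring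
  have hratio : (A + b) / (A + b - 1) = exp (log (A + b) - log (A + b - 1)) := by
    rw [← log_div (by linarith) hS.ne', exp_log (by positivity)]
  have key := mul_log_add_one_sub_log_lt (v := b - 1) (u := A + b - 1) (w := a + b - 1)
    (by linarith) (by linarith) (by linarith)
  rw [sub_add_cancel, sub_add_cancel] at key
  rw [mul_min_of_nonneg _ _ (by positivity)]
  refine lt_min (lt_mul_left (betaIntegrand_pos hp) ((one_lt_div hS).2 (by linarith))) ?_
  rw [betaIntegrand_eq_exp hp, betaIntegrand_eq_exp hq, hratio, ← exp_add, exp_lt_exp, h1p, h1q,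
    log_div hA.ne' (by linarith), log_div (by linarith) (by linarith), log_div hA.ne' hS.ne',
    log_div (by linarith) hS.ne']
  linear_combination key

lemma mul_min_betaIntegrand_le_integral {p q : ℝ} (hb : 1 ≤ b) (hp : 0 < p) (hpq : p ≤ q)
    (hq : q < 1) :
    (q - p) * min (betaIntegrand a b p) (betaIntegrand a b q) ≤
      ∫ t in p..q, betaIntegrand a b t := by
  have hsub : Icc p q ⊆ Ioo 0 1 := Icc_subset_Ioo hp hq
  have hint : IntervalIntegrable (betaIntegrand a b) MeasureTheory.volume p q :=
    (continuousOn_betaIntegrand.mono (by rwa [uIcc_of_le hpq])).intervalIntegrable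
  simpa using intervalIntegral.integral_mono_on hpq intervalIntegrable_const hint fun t ht =>
    (quasiconcaveOn_betaIntegrand hb).min_le_of_mem_Icc (hsub ⟨le_rfl, hpq⟩) (hsub ⟨hpq, le_rfl⟩) ht

end BetaIntegrand

/-- For `0 < κ ≤ 1`, `a ≥ 1/2`, `b > 1`:
`b ∫_{q(a,b+1,κ)}^{q(a,b,κ)} t^(a-1)(1-t)^(b-1) dt > q(a,b+1,κ)^a (1 - q(a,b+1,κ))^b`. -/
theorem key_integral_inequality (κ a b : ℝ) (hκ0 : 0 < κ) (hκ1 : κ ≤ 1)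
    (ha : 1 / 2 ≤ a) (hb : 1 < b) :
    qF a (b + 1) κ ^ a * (1 - qF a (b + 1) κ) ^ b <
      b * ∫ t in (qF a (b + 1) κ)..(qF a b κ), t ^ (a - 1) * (1 - t) ^ (b - 1) := by
  rw [qF, qF, add_sub_assoc, add_sub_cancel_right]
  set A := κ * a
  have hA : 0 < A := mul_pos hκ0 (by linarith)
  have hAa : A ≤ a := mul_le_of_le_one_left (by linarith) hκ1
  set p := A / (A + b)
  set q := A / (A + b - 1)
  have hS : 0 < A + b - 1 := by linarith
  have hp : 0 < p := by positivity
  have hpq : p < q := div_lt_div_of_pos_left hA hS (by linarith)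
  have hq : q < 1 := (div_lt_one hS).2 (by linarith)
  calc p ^ a * (1 - p) ^ b = p * (1 - p) * betaIntegrand a b p :=
        rpow_mul_one_sub_rpow_eq_mul_betaIntegrand ⟨hp, hpq.trans hq⟩
    _ < p * (1 - p) * ((A + b) / (A + b - 1) *
          min (betaIntegrand a b p) (betaIntegrand a b q)) := by
        have h1p : 0 < 1 - p := by linarith
        gcongr
        exact betaIntegrand_lt_mul_min hA hAa hb
    _ = b * ((q - p) * min (betaIntegrand a b p) (betaIntegrand a b q)) := by
        unfold p q
        field_simp
        ring
    _ ≤ b * ∫ t in p..q, betaIntegrand a b t := by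
        gcongr
        exact mul_min_betaIntegrand_le_integral hb.le hp hpq.le hq
end

section
/- For every real κ with 0 < κ ≤ 1 and every real a > 0, the limit as b → ∞ (b real) of I_{q(a,b,κ)}(a,b) equals (∫₀^{κa} t^(a-1) e^(−t) dt) / Γ(a). -/
open Filter

/-!
Substituting `t = s / M` with `M = κa + b - 1` turns the numerator and the Beta function into
`M^(-a) ∫ s^(a-1) (1 - s/M)^(b-1) ds` over `[0, κa]` and `[0, M]`. Since
`(1 - s/M)^(b-1) → e^(-s)` and, once `b ≥ κa + 1`, `(1 - s/M)^(b-1) ≤ e^(-s/2)`,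
dominated convergence sends the two integrals to `∫₀^{κa} s^(a-1) e^(-s) ds` and `Γ(a)`,
while the factors `M^(-a)` cancel.
-/

open MeasureTheory Set Real Topology

theorem tendsto_one_sub_div_rpow_sub_atTop (s d : ℝ) :
    Tendsto (fun x : ℝ => (1 - s / x) ^ (x - d)) atTop (𝓝 (exp (-s))) := by
  have hbase : Tendsto (fun x : ℝ => 1 + -s / x) atTop (𝓝 1) := by
    simpa using tendsto_const_nhds.add ((tendsto_const_nhds (x := -s)).div_atTop tendsto_id)
  have hcorr : Tendsto (fun x : ℝ => (1 + -s / x) ^ (-d)) atTop (𝓝 1) := by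
    simpa using hbase.rpow_const (Or.inl one_ne_zero)
  have h := (tendsto_one_add_div_rpow_exp (-s)).mul hcorr
  rw [mul_one] at h
  refine h.congr' ?_
  filter_upwards [eventually_gt_atTop (max s 0)] with x hx
  have hx0 : 0 < x := (le_max_right s 0).trans_lt hx
  have hpos : 0 < 1 + -s / x := by
    rw [neg_div, ← sub_eq_add_neg, sub_pos, div_lt_one hx0]
    exact (le_max_left s 0).trans_lt hx
  rw [← rpow_add hpos, ← sub_eq_add_neg, neg_div, ← sub_eq_add_neg]

theorem tendsto_max_one_sub_div_rpow_atTop (c s : ℝ) :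
    Tendsto (fun b : ℝ => max (1 - s / (c + b - 1)) 0 ^ (b - 1)) atTop (𝓝 (exp (-s))) := by
  have hM : Tendsto (fun b : ℝ => c + b - 1) atTop atTop :=
    tendsto_atTop_add_const_right _ _ (tendsto_atTop_add_const_left _ _ tendsto_id)
  refine ((tendsto_one_sub_div_rpow_sub_atTop s c).comp hM).congr' ?_
  filter_upwards [eventually_ge_atTop (max s 0 + 2 - c)] with b hb
  have hsM : s / (c + b - 1) ≤ 1 := by
    rw [div_le_one (by linarith [le_max_right s 0])]
    linarith [le_max_left s 0]
  simp only [Function.comp_apply, max_eq_left (sub_nonneg.2 hsM)]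
  ring_nf

theorem rpow_one_sub_le_exp_neg_mul {u p : ℝ} (hu : u ≤ 1) (hp : 0 ≤ p) :
    (1 - u) ^ p ≤ exp (-u * p) := by
  rw [exp_mul]
  exact rpow_le_rpow (sub_nonneg.2 hu) (one_sub_le_exp_neg u) hp

theorem max_one_sub_div_rpow_le_exp_neg_half {s M b : ℝ} (hs : 0 ≤ s) (hM : 0 < M)
    (hb : 1 < b) (hMb : M ≤ 2 * (b - 1)) : max (1 - s / M) 0 ^ (b - 1) ≤ exp (-(s / 2)) := by
  rcases le_or_gt s M with hsM | hMs
  · have hsM' : s / M ≤ 1 := (div_le_one hM).2 hsM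
    rw [max_eq_left (sub_nonneg.2 hsM')]
    refine (rpow_one_sub_le_exp_neg_mul hsM' (by linarith)).trans (exp_le_exp.2 ?_)
    rw [neg_mul, neg_le_neg_iff, div_mul_eq_mul_div, le_div_iff₀ hM]
    nlinarith
  · rw [max_eq_right (by rw [sub_nonpos, one_le_div hM]; exact hMs.le),
      zero_rpow (by linarith)]
    exact (exp_pos _).le

theorem integrableOn_rpow_mul_exp_neg_half {a : ℝ} (ha : 0 < a) :
    IntegrableOn (fun s : ℝ => s ^ (a - 1) * exp (-(s / 2))) (Ioi 0) := by
  refine (integrableOn_rpow_mul_exp_neg_mul_rpow (s := a - 1) (by linarith) one_pos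
    (one_half_pos (α := ℝ))).congr_fun (fun s _ => ?_) measurableSet_Ioi
  simp only [rpow_one, neg_mul, one_div_mul_eq_div]

/-- Clamping the base at `0` makes the integrand vanish beyond `c + b - 1` (for `b > 1`), so one
family of integrands serves for the numerator on `(0, κa]` and the Beta function on `(0, ∞)`. -/
theorem tendsto_setIntegral_rpow_mul_max_one_sub_div_rpow {a : ℝ} (ha : 0 < a) (c : ℝ)
    {S : Set ℝ} (hS : MeasurableSet S) (hS0 : S ⊆ Ioi 0) :
    Tendsto (fun b : ℝ => ∫ s in S, s ^ (a - 1) * max (1 - s / (c + b - 1)) 0 ^ (b - 1)) atTop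
      (𝓝 (∫ s in S, s ^ (a - 1) * exp (-s))) := by
  refine tendsto_integral_filter_of_dominated_convergence
    (fun s => s ^ (a - 1) * exp (-(s / 2)))
    (Eventually.of_forall fun b => by fun_prop) ?_
    ((integrableOn_rpow_mul_exp_neg_half ha).mono_set hS0)
    ((ae_restrict_iff' hS).2 (Eventually.of_forall fun s _ =>
      (tendsto_max_one_sub_div_rpow_atTop c s).const_mul _))
  filter_upwards [eventually_ge_atTop (|c| + 2)] with b hb
  refine (ae_restrict_iff' hS).2 (Eventually.of_forall fun s hs => ?_)
  have hs0 : 0 < s := hS0 hs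
  rw [norm_of_nonneg (mul_nonneg (rpow_nonneg hs0.le _) (rpow_nonneg (le_max_right _ _) _))]
  refine mul_le_mul_of_nonneg_left (max_one_sub_div_rpow_le_exp_neg_half hs0.le ?_ ?_ ?_)
    (rpow_nonneg hs0.le _) <;> linarith [le_abs_self c, neg_abs_le c]

theorem intervalIntegral_rpow_mul_one_sub_rpow_div_eq {a b c M : ℝ} (hc : 0 ≤ c) (hM : 0 < M)
    (hcM : c ≤ M) :
    ∫ t in (0:ℝ)..c / M, t ^ (a - 1) * (1 - t) ^ (b - 1)
      = M ^ (-a) * ∫ s in Ioc 0 c, s ^ (a - 1) * max (1 - s / M) 0 ^ (b - 1) := by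
  have hsubst := intervalIntegral.integral_comp_div
    (fun t : ℝ => t ^ (a - 1) * (1 - t) ^ (b - 1)) (a := 0) (b := c) hM.ne'
  rw [zero_div, smul_eq_mul, intervalIntegral.integral_of_le hc] at hsubst
  rw [← inv_mul_cancel_left₀ hM.ne' (∫ t in (0:ℝ)..c / M, _), ← hsubst,
    ← integral_const_mul, ← integral_const_mul]
  refine setIntegral_congr_fun measurableSet_Ioc fun s hs => ?_
  have hsM : s / M ≤ 1 := (div_le_one hM).2 (hs.2.trans hcM)
  rw [max_eq_left (sub_nonneg.2 hsM), div_rpow hs.1.le hM.le, rpow_neg hM.le,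
    rpow_sub_one hM.ne']
  field_simp

theorem setIntegral_Ioc_max_one_sub_div_rpow_eq_Ioi {a b M : ℝ} (hb : 1 < b) (hM : 0 < M) :
    ∫ s in Ioc 0 M, s ^ (a - 1) * max (1 - s / M) 0 ^ (b - 1)
      = ∫ s in Ioi 0, s ^ (a - 1) * max (1 - s / M) 0 ^ (b - 1) := by
  refine (setIntegral_eq_of_subset_of_forall_sdiff_eq_zero measurableSet_Ioi Ioc_subset_Ioi_self
    fun s hs => ?_).symm
  have hMs : M < s := lt_of_not_ge fun h => hs.2 ⟨hs.1, h⟩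
  rw [max_eq_right (by rw [sub_nonpos, one_le_div hM]; exact hMs.le), zero_rpow (by linarith),
    mul_zero]

theorem tendsto_regIncBeta_q_atTop_general (κ a : ℝ) (hκ0 : 0 < κ) (ha : 0 < a) :
    Tendsto (fun b : ℝ => regIncBeta (qF a b κ) a b) atTop
      (nhds ((∫ t in (0:ℝ)..(κ * a), t ^ (a - 1) * Real.exp (-t)) / Real.Gamma a)) := by
  have hc : 0 < κ * a := mul_pos hκ0 ha
  have hnum := tendsto_setIntegral_rpow_mul_max_one_sub_div_rpow ha (κ * a)
    (measurableSet_Ioc (b := κ * a)) Ioc_subset_Ioi_self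
  have hden := tendsto_setIntegral_rpow_mul_max_one_sub_div_rpow ha (κ * a) measurableSet_Ioi
    subset_rfl
  have hGamma : Gamma a = ∫ s in Ioi 0, s ^ (a - 1) * exp (-s) := by
    simp_rw [Gamma_eq_integral ha, mul_comm (exp _)]
  rw [← hGamma] at hden
  rw [intervalIntegral.integral_of_le hc.le]
  refine (hnum.div hden (Gamma_pos_of_pos ha).ne').congr' ?_
  filter_upwards [eventually_gt_atTop 1] with b hb
  have hM : 0 < κ * a + b - 1 := by linarith
  have hbeta : betaFun a b = (κ * a + b - 1) ^ (-a) *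
      ∫ s in Ioi 0, s ^ (a - 1) * max (1 - s / (κ * a + b - 1)) 0 ^ (b - 1) := by
    rw [betaFun, ← setIntegral_Ioc_max_one_sub_div_rpow_eq_Ioi hb hM,
      ← intervalIntegral_rpow_mul_one_sub_rpow_div_eq hM.le hM le_rfl, div_self hM.ne']
  rw [Pi.div_apply, regIncBeta, hbeta, qF,
    intervalIntegral_rpow_mul_one_sub_rpow_div_eq hc.le hM (by linarith),
    mul_div_mul_left _ _ (rpow_pos_of_pos hM _).ne']

/-- For `0 < κ ≤ 1` and `a > 0`, `I_{q(a,b,κ)}(a,b) → (∫₀^{κa} t^(a-1) e^(-t) dt)/Γ(a)`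
as `b → ∞`. -/
theorem tendsto_regIncBeta_q_atTop (κ a : ℝ) (hκ0 : 0 < κ) (hκ1 : κ ≤ 1) (ha : 0 < a) :
    Tendsto (fun b : ℝ => regIncBeta (qF a b κ) a b) atTop
      (nhds ((∫ t in (0:ℝ)..(κ * a), t ^ (a - 1) * Real.exp (-t)) / Real.Gamma a)) :=
  tendsto_regIncBeta_q_atTop_general κ a hκ0 ha
end

section
/- For every fixed real a ≥ 1/2 and real b > 1, the function κ ↦ I_{q(a,b,κ)}(a,b) is strictly increasing on (0, ∞); in particular, for every κ > 1 one has I_{q(a,b,κ)}(a,b) > I_{q(a,b,1)}(a,b). -/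
/-! The substitution `κ ↦ q(a,b,κ)` is a strictly increasing map of `(0, ∞)` into `(0, 1)`, and
`x ↦ I_x(a,b)` is strictly increasing on `[0, 1]` because the Beta integrand is positive on
`(0, 1)`; the theorem is the composition of the two. -/

open Set

section IncompleteBeta

variable {a b : ℝ}

lemma intervalIntegrable_betaIntegrand (ha : 0 < a) (hb : 1 ≤ b) (x y : ℝ) :
    IntervalIntegrable (fun t : ℝ => t ^ (a - 1) * (1 - t) ^ (b - 1)) MeasureTheory.volume x y :=
  (intervalIntegral.intervalIntegrable_rpow' (by linarith)).mul_continuousOn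
    (Continuous.continuousOn (by fun_prop (disch := exact sub_nonneg.2 hb)))

lemma integral_betaIntegrand_pos (ha : 0 < a) (hb : 1 ≤ b) {x y : ℝ}
    (hx : 0 ≤ x) (hxy : x < y) (hy : y ≤ 1) :
    0 < ∫ t in x..y, t ^ (a - 1) * (1 - t) ^ (b - 1) := by
  refine intervalIntegral.intervalIntegral_pos_of_pos_on
    (intervalIntegrable_betaIntegrand ha hb x y) (fun t ht => ?_) hxy
  have ht₀ : 0 < t := hx.trans_lt ht.1
  have ht₁ : 0 < 1 - t := by linarith [ht.2]
  positivity

lemma betaFun_pos (ha : 0 < a) (hb : 1 ≤ b) : 0 < betaFun a b :=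
  integral_betaIntegrand_pos ha hb le_rfl one_pos le_rfl

lemma regIncBeta_strictMonoOn (ha : 0 < a) (hb : 1 ≤ b) :
    StrictMonoOn (fun x => regIncBeta x a b) (Icc 0 1) := by
  intro x hx y hy hxy
  have hsplit := intervalIntegral.integral_add_adjacent_intervals
    (intervalIntegrable_betaIntegrand ha hb 0 x) (intervalIntegrable_betaIntegrand ha hb x y)
  have hpos := integral_betaIntegrand_pos ha hb hx.1 hxy hy.2
  simp only [regIncBeta]
  rw [div_lt_div_iff_of_pos_right (betaFun_pos ha hb)]
  linarith

lemma qF_mapsTo (ha : 0 < a) (hb : 1 < b) : MapsTo (qF a b) (Ioi 0) (Icc 0 1) := by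
  intro κ (hκ : 0 < κ)
  have hκa : 0 < κ * a := mul_pos hκ ha
  have hden : 0 < κ * a + b - 1 := by linarith
  exact ⟨(div_pos hκa hden).le, (div_le_one hden).2 (by linarith)⟩

lemma qF_strictMonoOn (ha : 0 < a) (hb : 1 < b) : StrictMonoOn (qF a b) (Ioi 0) := by
  intro κ₁ (hκ₁ : 0 < κ₁) κ₂ (hκ₂ : 0 < κ₂) hlt
  have hden₁ : 0 < κ₁ * a + b - 1 := by linarith [mul_pos hκ₁ ha]
  have hden₂ : 0 < κ₂ * a + b - 1 := by linarith [mul_pos hκ₂ ha]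
  rw [qF, qF, div_lt_div_iff₀ hden₁ hden₂]
  -- cross-multiplying leaves `κ₁ a (b - 1) < κ₂ a (b - 1)`
  nlinarith [mul_pos ha (mul_pos (sub_pos.2 hb) (sub_pos.2 hlt))]

end IncompleteBeta

/-- For fixed `a ≥ 1/2` and `b > 1`, `κ ↦ I_{q(a,b,κ)}(a,b)` is strictly increasing on
`(0, ∞)`; in particular for `κ > 1`, `I_{q(a,b,κ)}(a,b) > I_{q(a,b,1)}(a,b)`. -/
theorem regIncBeta_strictMono_in_kappa (a b : ℝ) (ha : 1 / 2 ≤ a) (hb : 1 < b) :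
    StrictMonoOn (fun κ : ℝ => regIncBeta (qF a b κ) a b) (Set.Ioi 0) ∧
      ∀ κ : ℝ, 1 < κ → regIncBeta (qF a b 1) a b < regIncBeta (qF a b κ) a b := by
  have ha₀ : 0 < a := by linarith
  have hmono : StrictMonoOn (fun κ : ℝ => regIncBeta (qF a b κ) a b) (Ioi 0) :=
    (regIncBeta_strictMonoOn ha₀ hb.le).comp (qF_strictMonoOn ha₀ hb) (qF_mapsTo ha₀ hb)
  exact ⟨hmono, fun κ hκ => hmono (mem_Ioi.2 one_pos) (mem_Ioi.2 (one_pos.trans hκ)) hκ⟩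
end

section
/- For every real κ with 0 < κ < 1, the infimum over all real a > 0 of (∫₀^{κa} t^(a-1) e^(−t) dt) / Γ(a) equals 0. -/
/-!
Chernoff bound: on `[0, κa]` one has `e^{-t} ≤ e^{(1-κ)a} e^{-t/κ}`, and integrating
`t^{a-1} e^{-t/κ}` over all of `(0, ∞)` gives `κ^a Γ(a)`. Hence the regularized incomplete
Gamma function at `κa` is at most `(κ e^{1-κ})^a`, and `κ e^{1-κ} < 1` because `κ < e^{κ-1}`
for `κ ≠ 1`. Letting `a → ∞` pushes the infimum of these nonnegative numbers down to `0`.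
-/

open MeasureTheory Set Real Filter

lemma intervalIntegral_rpow_mul_exp_neg_mul_le {M a r : ℝ} (hM : 0 ≤ M) (ha : 0 < a)
    (hr : 0 < r) :
    ∫ t in (0 : ℝ)..M, t ^ (a - 1) * exp (-(r * t)) ≤ (1 / r) ^ a * Gamma a := by
  have key := integral_rpow_mul_exp_neg_mul_Ioi ha hr
  have hint : IntegrableOn (fun t ↦ t ^ (a - 1) * exp (-(r * t))) (Ioi 0) :=
    .of_integral_ne_zero (by rw [key]; positivity)
  rw [intervalIntegral.integral_of_le hM, ← key]
  refine setIntegral_mono_set hint ?_ Ioc_subset_Ioi_self.eventuallyLE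
  filter_upwards [ae_restrict_mem measurableSet_Ioi] with t ht
  exact mul_nonneg (rpow_nonneg (le_of_lt ht) _) (exp_nonneg _)

lemma exp_neg_le_exp_mul_exp_neg_inv_mul {κ a t : ℝ} (hκ0 : 0 < κ) (hκ1 : κ ≤ 1)
    (ht : t ≤ κ * a) :
    exp (-t) ≤ exp ((1 - κ) * a) * exp (-(κ⁻¹ * t)) := by
  rw [← exp_add, exp_le_exp]
  have hκinv : 0 ≤ κ⁻¹ - 1 := sub_nonneg.2 ((one_le_inv₀ hκ0).2 hκ1)
  have hκa : (1 - κ) * a = (κ⁻¹ - 1) * (κ * a) := by field_simp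
  nlinarith [mul_le_mul_of_nonneg_left ht hκinv]

theorem intervalIntegral_rpow_mul_exp_neg_le {κ a : ℝ} (hκ0 : 0 < κ) (hκ1 : κ ≤ 1)
    (ha : 0 < a) :
    ∫ t in (0 : ℝ)..κ * a, t ^ (a - 1) * exp (-t) ≤ (κ * exp (1 - κ)) ^ a * Gamma a := by
  have hκa : 0 ≤ κ * a := by positivity
  have hpow : IntervalIntegrable (fun t : ℝ ↦ t ^ (a - 1)) volume 0 (κ * a) :=
    intervalIntegral.intervalIntegrable_rpow' (by linarith)
  calc ∫ t in (0 : ℝ)..κ * a, t ^ (a - 1) * exp (-t)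
      ≤ ∫ t in (0 : ℝ)..κ * a, exp ((1 - κ) * a) * (t ^ (a - 1) * exp (-(κ⁻¹ * t))) := by
        refine intervalIntegral.integral_mono_on hκa
          (hpow.mul_continuousOn (by fun_prop))
          ((hpow.mul_continuousOn (by fun_prop)).const_mul _) fun t ht ↦ ?_
        rw [mul_left_comm]
        exact mul_le_mul_of_nonneg_left (exp_neg_le_exp_mul_exp_neg_inv_mul hκ0 hκ1 ht.2)
          (rpow_nonneg ht.1 _)
    _ ≤ exp ((1 - κ) * a) * ((1 / κ⁻¹) ^ a * Gamma a) := by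
        rw [intervalIntegral.integral_const_mul]
        gcongr
        exact intervalIntegral_rpow_mul_exp_neg_mul_le hκa ha (inv_pos.2 hκ0)
    _ = (κ * exp (1 - κ)) ^ a * Gamma a := by
        rw [one_div, inv_inv, mul_rpow hκ0.le (exp_pos _).le, ← exp_mul]
        ring_nf

lemma mul_exp_one_sub_lt_one {κ : ℝ} (hκ : κ ≠ 1) : κ * exp (1 - κ) < 1 := by
  have hlt : κ < exp (κ - 1) := by linarith [add_one_lt_exp (sub_ne_zero.2 hκ)]
  calc κ * exp (1 - κ) < exp (κ - 1) * exp (1 - κ) := by gcongr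
    _ = 1 := by rw [← exp_add, sub_add_sub_cancel', sub_self, exp_zero]

/-- For `0 < κ < 1`, the infimum over `a > 0` of the regularized lower incomplete Gamma
function `(∫₀^{κa} t^(a-1) e^(-t) dt)/Γ(a)` equals `0`. -/
theorem inf_reg_inc_gamma_eq_zero (κ : ℝ) (hκ0 : 0 < κ) (hκ1 : κ < 1) :
    sInf { y : ℝ | ∃ a : ℝ, 0 < a ∧
      y = (∫ t in (0:ℝ)..(κ * a), t ^ (a - 1) * Real.exp (-t)) / Real.Gamma a } = 0 := by
  set S := { y : ℝ | ∃ a : ℝ, 0 < a ∧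
      y = (∫ t in (0:ℝ)..(κ * a), t ^ (a - 1) * Real.exp (-t)) / Real.Gamma a }
  have hnonneg : ∀ y ∈ S, 0 ≤ y := by
    rintro y ⟨a, ha, rfl⟩
    refine div_nonneg (intervalIntegral.integral_nonneg (by positivity) fun t ht ↦ ?_)
      (Gamma_pos_of_pos ha).le
    exact mul_nonneg (rpow_nonneg ht.1 _) (exp_nonneg _)
  refine le_antisymm ?_ (le_csInf ⟨_, 1, one_pos, rfl⟩ hnonneg)
  have hr : 0 < κ * exp (1 - κ) := by positivity
  refine ge_of_tendsto (tendsto_rpow_atTop_of_base_lt_one _ (by linarith)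
    (mul_exp_one_sub_lt_one hκ1.ne)) ?_
  filter_upwards [eventually_gt_atTop 0] with a ha
  refine csInf_le_of_le ⟨0, hnonneg⟩ ⟨a, ha, rfl⟩ ?_
  rw [div_le_iff₀ (Gamma_pos_of_pos ha)]
  exact intervalIntegral_rpow_mul_exp_neg_le hκ0 hκ1.le ha
end

section
/- The infimum over all real a > 0 of (∫₀^{a} t^(a-1) e^(−t) dt) / Γ(a) equals 1/2. -/
/-!
Substituting `t = a e^s` turns `t^(a-1) e^(-t) dt` into `a^a e^(-a) exp(-a(e^s - 1 - s)) ds`, so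
the ratio equals `L / (L + R)`, where `L` and `R` integrate `exp(-a(e^s - 1 - s))` over `s < 0`
and `s > 0`. For `s ≥ 0` we have `e^s - 1 - s ≥ e^(-s) - 1 + s` (that is, `sinh s ≥ s`), so
`R ≤ L` and the ratio is at least `1/2`. The two exponents agree up to `O(a s³)` near `0`, which
gives `L - R = O(1/a)`, while `R ≥ e^(-1)/√a` from the window `0 < s ≤ 1/√a`. Hence the ratio is
`1/2 + O(1/√a)`, and its infimum is `1/2`.
-/

open Real Set Filter MeasureTheory Topology

noncomputable def regLowerGammaAtMean (a : ℝ) : ℝ :=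
  (∫ t in (0:ℝ)..a, t ^ (a - 1) * exp (-t)) / Gamma a

noncomputable def gammaProfile (a s : ℝ) : ℝ := exp (-(a * (exp s - 1 - s)))

lemma gammaProfile_pos (a s : ℝ) : 0 < gammaProfile a s := exp_pos _

lemma abs_exp_sub_quadratic_le {s : ℝ} (hs : |s| ≤ 1) :
    |exp s - (1 + s + s ^ 2 / 2)| ≤ 2 / 9 * |s| ^ 3 := by
  have h := Real.exp_bound hs (n := 3) (by norm_num)
  norm_num [Finset.sum_range_succ, Nat.factorial] at h
  linarith

section Pointwise

variable {a s : ℝ}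

lemma gammaProfile_le_gammaProfile_neg (ha : 0 ≤ a) (hs : 0 ≤ s) :
    gammaProfile a s ≤ gammaProfile a (-s) := by
  have h := Real.self_le_sinh_iff.mpr hs
  rw [Real.sinh_eq] at h
  exact exp_le_exp.mpr (neg_le_neg (mul_le_mul_of_nonneg_left (by linarith) ha))

lemma gammaProfile_neg_le (ha : 0 ≤ a) : gammaProfile a (-s) ≤ exp a * exp (-a * s) := by
  rw [gammaProfile, ← exp_add]
  gcongr
  nlinarith [exp_pos (-s)]

lemma gammaProfile_neg_sub_le (ha : 0 ≤ a) (hs₀ : 0 ≤ s) (hs₁ : s ≤ 1) :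
    gammaProfile a (-s) - gammaProfile a s ≤ a / 2 * (s ^ 3 * exp (-(a / 4) * s ^ 2)) := by
  have hs : |s| ≤ 1 := by rwa [abs_of_nonneg hs₀]
  have hp := abs_le.mp (abs_exp_sub_quadratic_le hs)
  have hn := abs_le.mp (abs_exp_sub_quadratic_le (s := -s) (by rwa [abs_neg]))
  rw [abs_of_nonneg hs₀] at hp
  rw [abs_neg, abs_of_nonneg hs₀] at hn
  set φ := exp (-s) - 1 - -s
  set δ := (exp s - 1 - s) - φ with hδdef
  have hφ : s ^ 2 / 4 ≤ φ := by nlinarith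
  have hδ : δ ≤ s ^ 3 / 2 := by nlinarith
  -- `1 - exp (-x) ≤ x` with `x = a δ`
  have hgap : gammaProfile a (-s) - gammaProfile a s ≤ exp (-(a * φ)) * (a * δ) := by
    have : gammaProfile a s = exp (-(a * φ)) * exp (-(a * δ)) := by
      rw [gammaProfile, ← exp_add, hδdef]; ring_nf
    rw [this, gammaProfile]
    nlinarith [add_one_le_exp (-(a * δ)), exp_pos (-(a * φ))]
  calc gammaProfile a (-s) - gammaProfile a s ≤ exp (-(a * φ)) * (a * δ) := hgap
    _ ≤ exp (-(a * φ)) * (a * (s ^ 3 / 2)) := by gcongr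
    _ ≤ exp (-(a / 4) * s ^ 2) * (a * (s ^ 3 / 2)) := by
      gcongr
      nlinarith
    _ = a / 2 * (s ^ 3 * exp (-(a / 4) * s ^ 2)) := by ring

lemma exp_neg_one_le_gammaProfile (ha : 0 ≤ a) (hs : |s| ≤ 1) (has : a * s ^ 2 ≤ 1) :
    exp (-1) ≤ gammaProfile a s := by
  have h := (abs_le.mp (abs_exp_sub_one_sub_id_le hs)).2
  unfold gammaProfile
  gcongr
  nlinarith

end Pointwise

section ChangeOfVariables

variable {a : ℝ}

lemma abs_mul_exp_smul_rpow_mul_exp_neg (ha : 0 < a) (s : ℝ) :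
    |a * exp s| • ((a * exp s) ^ (a - 1) * exp (-(a * exp s)))
      = a ^ a * exp (-a) * gammaProfile a s := by
  have hpos : 0 < a * exp s := by positivity
  rw [smul_eq_mul, abs_of_pos hpos, ← mul_assoc, ← rpow_one_add' hpos.le (by simp [ha.ne']),
    mul_rpow ha.le (exp_pos s).le, ← exp_mul, gammaProfile]
  simp only [add_sub_cancel, mul_assoc, ← exp_add]
  congr 2
  ring

lemma injective_const_mul_exp (ha : 0 < a) : Function.Injective fun s => a * exp s :=
  (mul_right_injective₀ ha.ne').comp exp_injective

lemma range_const_mul_exp (ha : 0 < a) : range (fun s => a * exp s) = Ioi 0 := by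
  rw [← image_univ, ← image_image, image_univ, range_exp, image_mul_left_Ioi ha, mul_zero]

lemma integrable_gammaProfile (ha : 0 < a) : Integrable (gammaProfile a) := by
  have h := (integrableOn_image_iff_integrableOn_abs_deriv_smul MeasurableSet.univ
    (fun s _ => ((hasDerivAt_exp s).const_mul a).hasDerivWithinAt)
    (injective_const_mul_exp ha).injOn fun t => t ^ (a - 1) * exp (-t)).mp
  simp only [abs_mul_exp_smul_rpow_mul_exp_neg ha, integrableOn_univ, image_univ,
    range_const_mul_exp ha] at h
  refine (integrable_const_mul_iff (IsUnit.mk0 _ (by positivity)) _).mp (h ?_)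
  simpa only [mul_comm] using GammaIntegral_convergent ha

lemma setIntegral_image_const_mul_exp (ha : 0 < a) {S : Set ℝ} (hS : MeasurableSet S) :
    ∫ t in (fun s => a * exp s) '' S, t ^ (a - 1) * exp (-t)
      = a ^ a * exp (-a) * ∫ s in S, gammaProfile a s := by
  rw [integral_image_eq_integral_abs_deriv_smul hS
    (fun s _ => ((hasDerivAt_exp s).const_mul a).hasDerivWithinAt)
    (injective_const_mul_exp ha).injOn]
  simp only [abs_mul_exp_smul_rpow_mul_exp_neg ha, integral_const_mul]

lemma intervalIntegral_rpow_mul_exp_neg_eq (ha : 0 < a) :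
    ∫ t in (0:ℝ)..a, t ^ (a - 1) * exp (-t)
      = a ^ a * exp (-a) * ∫ s in Ioi 0, gammaProfile a (-s) := by
  have himage : (fun s => a * exp s) '' Iic 0 = Ioc 0 a := by
    rw [← image_image, image_exp_Iic, exp_zero, image_mul_left_Ioc ha, mul_zero, mul_one]
  rw [intervalIntegral.integral_of_le ha.le, ← himage,
    setIntegral_image_const_mul_exp ha measurableSet_Iic, integral_comp_neg_Ioi, neg_zero]

lemma Gamma_eq_integral_gammaProfile (ha : 0 < a) :
    Gamma a = a ^ a * exp (-a) * ∫ s, gammaProfile a s := by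
  rw [Gamma_eq_integral ha, ← range_const_mul_exp ha, ← image_univ,
    ← setIntegral_univ (f := gammaProfile a),
    ← setIntegral_image_const_mul_exp ha MeasurableSet.univ]
  simp only [mul_comm]

end ChangeOfVariables

lemma integral_pow_three_mul_exp_neg_mul_sq {b : ℝ} (hb : 0 < b) :
    ∫ s in Ioi 0, s ^ 3 * exp (-b * s ^ 2) = 1 / (2 * b ^ 2) := by
  have h := integral_rpow_mul_exp_neg_mul_rpow (p := 2) (q := 3) two_pos (by norm_num) hb
  norm_num [Gamma_two] at h
  simp only [neg_mul, h]
  ring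

lemma integrableOn_pow_three_mul_exp_neg_mul_sq {b : ℝ} (hb : 0 < b) :
    IntegrableOn (fun s => s ^ 3 * exp (-b * s ^ 2)) (Ioi 0) := by
  simpa using integrableOn_rpow_mul_exp_neg_mul_sq hb (s := 3) (by norm_num)

lemma div_add_le_half_add {L R : ℝ} (hR : 0 < R) (hRL : R ≤ L) :
    L / (L + R) ≤ 1 / 2 + (L - R) / (4 * R) := by
  rw [div_le_iff₀ (by linarith)]
  field_simp
  nlinarith

section Estimates

variable {a : ℝ}

lemma integral_gammaProfile_eq_add (ha : 0 < a) :
    ∫ s, gammaProfile a s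
      = (∫ s in Ioi 0, gammaProfile a (-s)) + ∫ s in Ioi 0, gammaProfile a s := by
  rw [integral_comp_neg_Ioi, neg_zero, intervalIntegral.integral_Iic_add_Ioi
    (integrable_gammaProfile ha).integrableOn (integrable_gammaProfile ha).integrableOn]

lemma integral_gammaProfile_pos (ha : 0 < a) : 0 < ∫ s, gammaProfile a s :=
  integral_exp_pos (integrable_gammaProfile ha)

lemma regLowerGammaAtMean_eq (ha : 0 < a) :
    regLowerGammaAtMean a = (∫ s in Ioi 0, gammaProfile a (-s))
      / ((∫ s in Ioi 0, gammaProfile a (-s)) + ∫ s in Ioi 0, gammaProfile a s) := by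
  have hc : 0 < a ^ a * exp (-a) := by positivity
  rw [regLowerGammaAtMean, intervalIntegral_rpow_mul_exp_neg_eq ha,
    Gamma_eq_integral_gammaProfile ha, integral_gammaProfile_eq_add ha,
    mul_div_mul_left _ _ hc.ne']

lemma integral_gammaProfile_le_integral_neg (ha : 0 < a) :
    ∫ s in Ioi 0, gammaProfile a s ≤ ∫ s in Ioi 0, gammaProfile a (-s) :=
  setIntegral_mono_on (integrable_gammaProfile ha).integrableOn
    (integrable_gammaProfile ha).comp_neg.integrableOn measurableSet_Ioi
    fun _ hs => gammaProfile_le_gammaProfile_neg ha.le (le_of_lt hs)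

lemma setIntegral_Ioc_gammaProfile_neg_sub_le (ha : 0 < a) :
    ∫ s in Ioc 0 1, (gammaProfile a (-s) - gammaProfile a s) ≤ 4 / a := by
  have hb : 0 < a / 4 := by positivity
  have hint : IntegrableOn (fun s => a / 2 * (s ^ 3 * exp (-(a / 4) * s ^ 2))) (Ioi 0) :=
    (integrableOn_pow_three_mul_exp_neg_mul_sq hb).const_mul _
  have hdiff := (integrable_gammaProfile ha).comp_neg.sub (integrable_gammaProfile ha)
  calc ∫ s in Ioc 0 1, (gammaProfile a (-s) - gammaProfile a s)
      ≤ ∫ s in Ioc 0 1, a / 2 * (s ^ 3 * exp (-(a / 4) * s ^ 2)) :=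
        setIntegral_mono_on hdiff.integrableOn (hint.mono_set Ioc_subset_Ioi_self)
          measurableSet_Ioc fun s hs => gammaProfile_neg_sub_le ha.le hs.1.le hs.2
    _ ≤ ∫ s in Ioi 0, a / 2 * (s ^ 3 * exp (-(a / 4) * s ^ 2)) := by
        refine setIntegral_mono_set hint ?_ Ioc_subset_Ioi_self.eventuallyLE
        filter_upwards [self_mem_ae_restrict measurableSet_Ioi] with s (hs : 0 < s)
        positivity
    _ = 4 / a := by
        rw [integral_const_mul, integral_pow_three_mul_exp_neg_mul_sq hb]
        field_simp
        ring

lemma setIntegral_Ioi_one_gammaProfile_neg_sub_le (ha : 0 < a) :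
    ∫ s in Ioi 1, (gammaProfile a (-s) - gammaProfile a s) ≤ 1 / a := by
  have hdiff : Integrable fun s => gammaProfile a (-s) - gammaProfile a s :=
    (integrable_gammaProfile ha).comp_neg.sub (integrable_gammaProfile ha)
  calc ∫ s in Ioi 1, (gammaProfile a (-s) - gammaProfile a s)
      ≤ ∫ s in Ioi 1, exp a * exp (-a * s) :=
        setIntegral_mono_on hdiff.integrableOn ((exp_neg_integrableOn_Ioi 1 ha).const_mul _)
          measurableSet_Ioi fun s _ => by
            linarith [gammaProfile_neg_le (s := s) ha.le, gammaProfile_pos a s]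
    _ = 1 / a := by
        rw [integral_const_mul, integral_exp_mul_Ioi (by linarith) 1, mul_one, exp_neg]
        field_simp

lemma integral_gammaProfile_neg_sub_le (ha : 0 < a) :
    (∫ s in Ioi 0, gammaProfile a (-s)) - ∫ s in Ioi 0, gammaProfile a s ≤ 5 / a := by
  have hdiff : Integrable fun s => gammaProfile a (-s) - gammaProfile a s :=
    (integrable_gammaProfile ha).comp_neg.sub (integrable_gammaProfile ha)
  rw [← integral_sub (integrable_gammaProfile ha).comp_neg.integrableOn
      (integrable_gammaProfile ha).integrableOn, ← Ioc_union_Ioi_eq_Ioi zero_le_one,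
    setIntegral_union (Ioc_disjoint_Ioi le_rfl) measurableSet_Ioi hdiff.integrableOn
      hdiff.integrableOn]
  have := setIntegral_Ioc_gammaProfile_neg_sub_le ha
  have := setIntegral_Ioi_one_gammaProfile_neg_sub_le ha
  have : 5 / a = 4 / a + 1 / a := by ring
  linarith

lemma exp_neg_one_div_sqrt_le_integral_gammaProfile (ha : 1 ≤ a) :
    exp (-1) / √a ≤ ∫ s in Ioi 0, gammaProfile a s := by
  have ha₀ : 0 < a := by linarith
  have hu : (√a)⁻¹ ≤ 1 := inv_le_one_of_one_le₀ (one_le_sqrt.mpr ha)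
  have hau : a * (√a)⁻¹ ^ 2 = 1 := by rw [inv_pow, sq_sqrt ha₀.le, mul_inv_cancel₀ ha₀.ne']
  calc exp (-1) / √a = ∫ _ in Ioc 0 (√a)⁻¹, exp (-1) := by
        rw [setIntegral_const, measureReal_def, volume_Ioc, sub_zero,
          ENNReal.toReal_ofReal (by positivity), smul_eq_mul, div_eq_inv_mul]
    _ ≤ ∫ s in Ioc 0 (√a)⁻¹, gammaProfile a s := by
        refine setIntegral_mono_on (integrableOn_const (by simp))
          (integrable_gammaProfile ha₀).integrableOn measurableSet_Ioc fun s hs => ?_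
        refine exp_neg_one_le_gammaProfile ha₀.le ?_ ?_
        · rw [abs_of_pos hs.1]; exact hs.2.trans hu
        · calc a * s ^ 2 ≤ a * (√a)⁻¹ ^ 2 :=
                mul_le_mul_of_nonneg_left (pow_le_pow_left₀ hs.1.le hs.2 2) ha₀.le
            _ = 1 := hau
    _ ≤ ∫ s in Ioi 0, gammaProfile a s :=
        setIntegral_mono_set (integrable_gammaProfile ha₀).integrableOn
          (Eventually.of_forall fun s => (gammaProfile_pos a s).le)
          Ioc_subset_Ioi_self.eventuallyLE

lemma half_le_regLowerGammaAtMean (ha : 0 < a) : 1 / 2 ≤ regLowerGammaAtMean a := by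
  have hsum := integral_gammaProfile_pos ha
  rw [integral_gammaProfile_eq_add ha] at hsum
  rw [regLowerGammaAtMean_eq ha, le_div_iff₀ hsum]
  linarith [integral_gammaProfile_le_integral_neg ha]

lemma regLowerGammaAtMean_le (ha : 1 ≤ a) :
    regLowerGammaAtMean a ≤ 1 / 2 + 5 * exp 1 / (4 * √a) := by
  have ha₀ : 0 < a := by linarith
  have hR := exp_neg_one_div_sqrt_le_integral_gammaProfile ha
  rw [regLowerGammaAtMean_eq ha₀]
  refine (div_add_le_half_add (lt_of_lt_of_le (by positivity) hR)
    (integral_gammaProfile_le_integral_neg ha₀)).trans ?_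
  calc 1 / 2 + ((∫ s in Ioi 0, gammaProfile a (-s)) - ∫ s in Ioi 0, gammaProfile a s)
        / (4 * ∫ s in Ioi 0, gammaProfile a s)
      ≤ 1 / 2 + 5 / a / (4 * (exp (-1) / √a)) := by
        gcongr
        exact integral_gammaProfile_neg_sub_le ha₀
    _ = 1 / 2 + 5 * exp 1 / (4 * √a) := by
        rw [exp_neg]
        field_simp
        linear_combination (10 * exp 1) * mul_self_sqrt ha₀.le

end Estimates

lemma tendsto_regLowerGammaAtMean : Tendsto regLowerGammaAtMean atTop (𝓝 (1 / 2)) := by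
  have hbound : Tendsto (fun a => 1 / 2 + 5 * exp 1 / (4 * √a)) atTop (𝓝 (1 / 2)) := by
    simpa using tendsto_const_nhds.add
      (tendsto_const_nhds.div_atTop (tendsto_sqrt_atTop.const_mul_atTop four_pos))
  refine tendsto_of_tendsto_of_tendsto_of_le_of_le' tendsto_const_nhds hbound ?_ ?_
  · filter_upwards [eventually_gt_atTop 0] with a ha using half_le_regLowerGammaAtMean ha
  · filter_upwards [eventually_ge_atTop 1] with a ha using regLowerGammaAtMean_le ha

/-- The infimum over `a > 0` of the regularized lower incomplete Gamma function
`(∫₀^a t^(a-1) e^(-t) dt)/Γ(a)` equals `1/2`. -/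
theorem inf_reg_inc_gamma_at_mean_eq_half :
    sInf { y : ℝ | ∃ a : ℝ, 0 < a ∧
      y = (∫ t in (0:ℝ)..a, t ^ (a - 1) * Real.exp (-t)) / Real.Gamma a } = 1 / 2 := by
  have hlower : ∀ y ∈ { y : ℝ | ∃ a : ℝ, 0 < a ∧ y = regLowerGammaAtMean a }, 1 / 2 ≤ y := by
    rintro _ ⟨a, ha, rfl⟩
    exact half_le_regLowerGammaAtMean ha
  refine le_antisymm ?_ (le_csInf ⟨_, 1, one_pos, rfl⟩ hlower)
  refine ge_of_tendsto tendsto_regLowerGammaAtMean ?_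
  filter_upwards [eventually_gt_atTop 0] with a ha using csInf_le ⟨1 / 2, hlower⟩ ⟨a, ha, rfl⟩
end
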